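/- arXiv:2202.08330 — 4 statements merged into one kernel-verified Lean document; each statement's English description precedes it below -/
import Mathlib

section
/- Assume the subcriticality condition at dimension k ≥ 1 and let p_i = n^{-α_i}. Let H be the q-skeleton of σ_k (the subcomplex of σ_k consisting of all simplices of dimension at most q), and define K_H = max{ m ≤ C(n,k+1) : N(n, m·C(k+1,2), m·C(k+1,3), ..., m·C(k+1,q+1); H) ≤ n^{k+1 - C(k+1,q+1)·α_q} }. Then there exists a constant C ≥ 1, depending only on k, such that for all n large enough, C^{-1} · n^{q+1-C(k,q)·α_q} ≤ K_H ≤ C · n^{q+1-C(k,q)·α_q}. -/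
open scoped BigOperators

/-- A finite abstract simplicial complex: a nonempty family of nonempty finite subsets of `ℕ`
(the simplices), closed under taking nonempty subsets. -/
structure SComplex where
  faces : Finset (Finset ℕ)
  faces_nonempty : faces.Nonempty
  empty_not_mem : ∅ ∉ faces
  down_closed : ∀ s ∈ faces, ∀ t : Finset ℕ, t ⊆ s → t ≠ ∅ → t ∈ faces

namespace SComplex

/-- The vertex set of a simplicial complex. -/
def verts (F : SComplex) : Finset ℕ := F.faces.sup id

/-- The finset of `i`-simplices (simplices with `i+1` vertices). -/
def simplices (F : SComplex) (i : ℕ) : Finset (Finset ℕ) :=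
  F.faces.filter fun s => s.card = i + 1

/-- `s i F` is the number of `i`-simplices of `F`. -/
def s (F : SComplex) (i : ℕ) : ℕ := (F.simplices i).card

/-- The dimension of a simplicial complex: the largest `i` with an `i`-simplex. -/
def dim (F : SComplex) : ℕ := F.faces.sup Finset.card - 1

/-- `H` is a subcomplex of `F`. -/
def IsSubcomplex (H F : SComplex) : Prop := H.faces ⊆ F.faces

/-- An ordered copy of `G` in `F`: an injective map on the vertices of `G` (normalized to `0`
off the vertex set of `G`) mapping the vertex set of every simplex of `G` onto the vertex set
of a simplex of `F` (necessarily of the same dimension). -/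
def IsOrderedCopy (F G : SComplex) (φ : ℕ → ℕ) : Prop :=
  Set.InjOn φ ↑G.verts ∧ (∀ v ∉ G.verts, φ v = 0) ∧
    ∀ t ∈ G.faces, t.image φ ∈ F.faces

/-- `nOrdered F G` is the number of ordered copies of `G` in `F`. -/
noncomputable def nOrdered (F G : SComplex) : ℕ :=
  Set.ncard {φ : ℕ → ℕ | IsOrderedCopy F G φ}

/-- `F` is isomorphic to `G`. -/
def Iso (F G : SComplex) : Prop :=
  ∃ φ : ℕ → ℕ, Set.InjOn φ ↑G.verts ∧ F.faces = G.faces.image (Finset.image φ)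

/-- `nCopies F G` is the number of unordered copies of `G` in `F`, i.e. the number of
subcomplexes of `F` isomorphic to `G`. -/
noncomputable def nCopies (F G : SComplex) : ℕ :=
  Set.ncard {H : SComplex | H.IsSubcomplex F ∧ H.Iso G}

/-- `Nmax m k G` is the maximum of `nCopies F G` over all simplicial complexes `F` with
`s i F ≤ m i` for every `i ≤ k` (the extremal parameter `N(m₀,…,m_k;G)`). -/
noncomputable def Nmax (m : ℕ → ℕ) (k : ℕ) (G : SComplex) : ℕ :=
  sSup {t : ℕ | ∃ F : SComplex, (∀ i ≤ k, F.s i ≤ m i) ∧ t = nCopies F G}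

/-- `gammaLP m k G` is the optimal value of the linear program: maximize `∑_{v ∈ G₀} x v`
subject to `0 ≤ ∑_{v ∈ σ} x v ≤ log (m i)` for every `i`-simplex `σ` of `G`, `i ≤ k`. -/
noncomputable def gammaLP (m : ℕ → ℕ) (k : ℕ) (G : SComplex) : ℝ :=
  sSup {t : ℝ | ∃ x : ℕ → ℝ,
    (∀ i ≤ k, ∀ σ ∈ G.simplices i,
        0 ≤ ∑ v ∈ σ, x v ∧ ∑ v ∈ σ, x v ≤ Real.log (m i)) ∧
    t = ∑ v ∈ G.verts, x v}

/-- The potential `i`-simplices on vertex set `{1,…,n}` given the complex `K`: the `(i+1)`-sets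
all of whose `i`-element subsets (the `(i-1)`-dimensional boundary faces) belong to `K`. -/
def potentialSimplices (n i : ℕ) (K : SComplex) : Finset (Finset ℕ) :=
  ((Finset.Icc 1 n).powersetCard (i + 1)).filter
    fun σ => ∀ t ∈ σ.powersetCard i, t ∈ K.faces

/-- The probability that the multi-parameter random simplicial complex `K(n; p₁,…,p_k)` on
vertex set `{1,…,n}` equals the complex `K`. -/
noncomputable def complexProb (n k : ℕ) (p : ℕ → ℝ) (K : SComplex) : ℝ :=
  if K.verts = Finset.Icc 1 n ∧ ∀ t ∈ K.faces, t.card ≤ k + 1 then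
    ∏ i ∈ Finset.Icc 1 k,
      p i ^ K.s i * (1 - p i) ^ ((potentialSimplices n i K).card - K.s i)
  else 0

/-- The probability of an event `A` under the multi-parameter random simplicial complex. -/
noncomputable def pr (n k : ℕ) (p : ℕ → ℝ) (A : Set SComplex) : ℝ :=
  ∑' K : SComplex, A.indicator (complexProb n k p) K

/-- The expectation of `f` under the multi-parameter random simplicial complex. -/
noncomputable def expec (n k : ℕ) (p : ℕ → ℝ) (f : SComplex → ℝ) : ℝ :=
  ∑' K : SComplex, complexProb n k p K * f K

/-- `μ_{o,n}(G) = (n)_{s₀(G)} ∏_{i=1}^k p_i^{s_i(G)}`. -/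
noncomputable def muo (n k : ℕ) (p : ℕ → ℝ) (G : SComplex) : ℝ :=
  (n.descFactorial (G.s 0) : ℝ) * ∏ i ∈ Finset.Icc 1 k, p i ^ G.s i

/-- `Ψ_{G,n} = n^{s₀(G)} ∏_{i=1}^k p_i^{s_i(G)}`. -/
noncomputable def Psi (n k : ℕ) (p : ℕ → ℝ) (G : SComplex) : ℝ :=
  (n : ℝ) ^ G.s 0 * ∏ i ∈ Finset.Icc 1 k, p i ^ G.s i

/-- `M*_{G,n}(p₁,…,p_k)`: the largest integer `m` with `1 ≤ m ≤ C(n,k+1)/s_k(G)` such that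
`N(n, m·s₁(G), …, m·s_k(G); H) ≤ Ψ_{H,n}` for every (non-empty) subcomplex `H` of `G`. -/
noncomputable def Mstar (n k : ℕ) (p : ℕ → ℝ) (G : SComplex) : ℕ :=
  sSup {m : ℕ | 1 ≤ m ∧ m * G.s k ≤ n.choose (k + 1) ∧
    ∀ H : SComplex, H.IsSubcomplex G →
      (Nmax (fun i => if i = 0 then n else m * G.s i) k H : ℝ) ≤ Psi n k p H}

/-- `σ_k`: the complete simplicial complex of dimension `k` on the `k+1` vertices `{1,…,k+1}`. -/
def simplexComplex (k : ℕ) : SComplex where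
  faces := (Finset.Icc 1 (k + 1)).powerset.filter fun s => s ≠ ∅
  faces_nonempty := ⟨{1}, by
    simp only [Finset.mem_filter, Finset.mem_powerset, Finset.singleton_subset_iff,
      Finset.mem_Icc]
    exact ⟨⟨le_refl 1, Nat.le_add_left 1 k⟩, by simp⟩⟩
  empty_not_mem := by simp
  down_closed := by
    intro s hs t hts htne
    simp only [Finset.mem_filter, Finset.mem_powerset] at hs ⊢
    exact ⟨hts.trans hs.1, htne⟩

/-- The `q`-skeleton of a simplicial complex: all simplices of dimension at most `q`. -/
def skeleton (F : SComplex) (q : ℕ) : SComplex where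
  faces := F.faces.filter fun s => s.card ≤ q + 1
  faces_nonempty := by
    obtain ⟨t, ht⟩ := F.faces_nonempty
    have htne : t ≠ ∅ := fun h => F.empty_not_mem (h ▸ ht)
    obtain ⟨v, hv⟩ := Finset.nonempty_iff_ne_empty.2 htne
    refine ⟨{v}, ?_⟩
    simp only [Finset.mem_filter]
    exact ⟨F.down_closed t ht {v} (Finset.singleton_subset_iff.2 hv) (by simp),
      by simp⟩
  empty_not_mem := fun h => F.empty_not_mem (Finset.mem_filter.1 h).1
  down_closed := by
    intro t ht u hut hune
    rw [Finset.mem_filter] at ht ⊢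
    exact ⟨F.down_closed t ht.1 u hut hune, le_trans (Finset.card_le_card hut) ht.2⟩

open Classical in
/-- The simplicial boundary matrix `∂_j : C_j → C_{j-1}` over `ℚ`, with the usual signs
determined by the ordering of the vertices. -/
noncomputable def boundaryMatrix (K : SComplex) (j : ℕ) :
    Matrix ↥(K.simplices (j - 1)) ↥(K.simplices j) ℚ :=
  fun τ σ =>
    if τ.1 ⊆ σ.1 then
      (-1 : ℚ) ^ ((σ.1.filter fun w : ℕ => (w : WithBot ℕ) < (σ.1 \ τ.1).min).card)
    else 0

/-- The `j`-th Betti number of `K` (over `ℚ`):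
`β_j = dim ker ∂_j - rank ∂_{j+1} = s_j(K) - rank ∂_j - rank ∂_{j+1}`. -/
noncomputable def betti (K : SComplex) (j : ℕ) : ℕ :=
  K.s j - (K.boundaryMatrix j).rank - (K.boundaryMatrix (j + 1)).rank

/-- The number of free `j`-simplices of `K`: `j`-simplices not contained in any strictly
larger simplex of `K`. -/
def freeCount (K : SComplex) (j : ℕ) : ℕ :=
  ((K.simplices j).filter fun t => ∀ u ∈ K.faces, t ⊆ u → u = t).card

end SComplex

open SComplex
namespace Stmt11

/-- The `r`-cliques of a `u`-uniform family `B` of finsets of `ℕ`. -/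
def cliqueFinset (B : Finset (Finset ℕ)) (u r : ℕ) : Finset (Finset ℕ) :=
  ((B.sup id).powersetCard r).filter fun S => ∀ T ∈ S.powersetCard u, T ∈ B

lemma subset_support {B : Finset (Finset ℕ)} {u r : ℕ} (hu : 1 ≤ u) (hur : u ≤ r)
    {S : Finset ℕ} (hcard : S.card = r) (hcl : ∀ T ⊆ S, T.card = u → T ∈ B) :
    S ⊆ B.sup id := by
  intro v hv
  obtain ⟨T', hT'sub, hT'card⟩ := Finset.exists_subset_card_eq
    (show u - 1 ≤ (S.erase v).card by
      rw [Finset.card_erase_of_mem hv, hcard]; omega)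
  have hvT' : v ∉ T' := fun h => (Finset.mem_erase.1 (hT'sub h)).1 rfl
  have hT : insert v T' ⊆ S := by
    intro x hx; rcases Finset.mem_insert.1 hx with rfl | hx
    · exact hv
    · exact (Finset.erase_subset _ _) (hT'sub hx)
  have hTc : (insert v T').card = u := by
    rw [Finset.card_insert_of_notMem hvT', hT'card]; omega
  exact Finset.mem_sup.2 ⟨_, hcl _ hT hTc, Finset.mem_insert_self v T'⟩

lemma mem_cliqueFinset {B : Finset (Finset ℕ)} {u r : ℕ} (hu : 1 ≤ u) (hur : u ≤ r)
    {S : Finset ℕ} :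
    S ∈ cliqueFinset B u r ↔ S.card = r ∧ ∀ T ⊆ S, T.card = u → T ∈ B := by
  constructor
  · rintro hS
    rw [cliqueFinset, Finset.mem_filter, Finset.mem_powersetCard] at hS
    exact ⟨hS.1.2, fun T hT hTc => hS.2 T (Finset.mem_powersetCard.2 ⟨hT, hTc⟩)⟩
  · rintro ⟨h1, h2⟩
    rw [cliqueFinset, Finset.mem_filter, Finset.mem_powersetCard]
    exact ⟨⟨subset_support hu hur h1 h2, h1⟩, fun T hT => by
      rw [Finset.mem_powersetCard] at hT; exact h2 T hT.1 hT.2⟩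

lemma sum_count {V : Finset ℕ} {N : Finset (Finset ℕ)} {r : ℕ}
    (hsub : ∀ S ∈ N, S ⊆ V) (hcard : ∀ S ∈ N, S.card = r) :
    ∑ v ∈ V, (N.filter fun S => v ∈ S).card = r * N.card := by
  calc ∑ v ∈ V, (N.filter fun S => v ∈ S).card
      = ∑ v ∈ V, ∑ S ∈ N, if v ∈ S then 1 else 0 := by
        refine Finset.sum_congr rfl fun v _ => ?_; rw [Finset.card_filter]
    _ = ∑ S ∈ N, ∑ v ∈ V, if v ∈ S then 1 else 0 := Finset.sum_comm
    _ = ∑ S ∈ N, (V.filter fun v => v ∈ S).card := by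
        refine Finset.sum_congr rfl fun S _ => ?_; rw [Finset.card_filter]
    _ = ∑ S ∈ N, r := by
        refine Finset.sum_congr rfl fun S hS => ?_
        rw [Finset.filter_mem_eq_inter, Finset.inter_eq_right.2 (hsub S hS), hcard S hS]
    _ = r * N.card := by rw [Finset.sum_const, smul_eq_mul, mul_comm]

lemma min_le_rpow_mul {x y θ : ℝ} (hx : 0 ≤ x) (hy : 0 ≤ y) (hθ : 0 ≤ θ) (hθ1 : θ ≤ 1) :
    min x y ≤ x ^ (1 - θ) * y ^ θ := by
  have hm : (0:ℝ) ≤ min x y := le_min hx hy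
  have h1 : min x y = min x y ^ (1 - θ) * min x y ^ θ := by
    rw [← Real.rpow_add' hm (by norm_num), sub_add_cancel, Real.rpow_one]
  rw [h1]
  exact mul_le_mul (Real.rpow_le_rpow hm (min_le_left _ _) (by linarith))
    (Real.rpow_le_rpow hm (min_le_right _ _) hθ)
    (Real.rpow_nonneg hm θ) (Real.rpow_nonneg hx _)

lemma clique_bound : ∀ r u : ℕ, 1 ≤ u → u ≤ r → ∃ C : ℝ, 1 ≤ C ∧
    ∀ B : Finset (Finset ℕ), (∀ b ∈ B, b.card = u) →
      ((cliqueFinset B u r).card : ℝ) ≤ C * (B.card : ℝ) ^ ((r : ℝ) / (u : ℝ)) := by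
  intro r
  induction r using Nat.strong_induction_on with
  | _ r IH =>
    intro u hu hur
    rcases eq_or_lt_of_le hur with rfl | hlt
    · -- base: r = u
      refine ⟨1, le_refl 1, fun B hB => ?_⟩
      have hsub : cliqueFinset B u u ⊆ B := fun S hS => by
        rw [mem_cliqueFinset hu le_rfl] at hS
        exact hS.2 S Finset.Subset.rfl hS.1
      have h := Finset.card_le_card hsub
      have hu0 : ((u:ℝ)/(u:ℝ)) = 1 := div_self (Nat.cast_ne_zero.2 (by omega))
      rw [one_mul, hu0, Real.rpow_one]
      exact_mod_cast h
    rcases eq_or_lt_of_le hu with rfl | hu2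
    · -- base: u = 1
      refine ⟨1, le_refl 1, fun B hB => ?_⟩
      have hV : (B.sup id).card ≤ B.card := by
        rw [Finset.sup_eq_biUnion]
        calc (B.biUnion id).card ≤ ∑ b ∈ B, (id b).card := Finset.card_biUnion_le
          _ = ∑ _b ∈ B, 1 := Finset.sum_congr rfl fun b hb => hB b hb
          _ = B.card := by simp
      have h1 : (cliqueFinset B 1 r).card ≤ ((B.sup id).powersetCard r).card :=
        Finset.card_filter_le _ _
      rw [Finset.card_powersetCard] at h1
      have h2 : (cliqueFinset B 1 r).card ≤ B.card ^ r :=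
        le_trans h1 (le_trans (Nat.choose_le_choose r hV) (Nat.choose_le_pow _ _))
      have : ((r:ℝ)/((1:ℕ):ℝ)) = (r:ℕ) := by norm_num
      rw [one_mul, this, Real.rpow_natCast]
      exact_mod_cast h2
    · -- step: 2 ≤ u < r
      set r' := r - 1 with hr'
      have hrr : r = r' + 1 := by omega
      have hur' : u ≤ r' := by omega
      obtain ⟨C₁, hC₁, H₁⟩ := IH r' (by omega) u hu hur'
      obtain ⟨C₂, hC₂, H₂⟩ := IH r' (by omega) (u-1) (by omega) (by omega)
      refine ⟨C₁ * C₂ * u, ?_, fun B hB => ?_⟩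
      · have hu1 : (1:ℝ) ≤ (u:ℝ) := by exact_mod_cast hu
        have h12 : (1:ℝ) ≤ C₁ * C₂ := by nlinarith
        nlinarith
      set V := B.sup id with hV
      set N := cliqueFinset B u r with hN
      set M := B.card with hM
      have hNsub : ∀ S ∈ N, S ⊆ V := by
        intro S hS
        rw [hN, cliqueFinset, Finset.mem_filter, Finset.mem_powersetCard] at hS
        exact hS.1.1
      have hNcard : ∀ S ∈ N, S.card = r := by
        intro S hS
        rw [hN, mem_cliqueFinset hu (le_of_lt hlt)] at hS
        exact hS.1
      have hNmem : ∀ S ∈ N, ∀ T ⊆ S, T.card = u → T ∈ B := by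
        intro S hS
        rw [hN, mem_cliqueFinset hu (le_of_lt hlt)] at hS
        exact hS.2
      -- per-vertex bound
      set θ : ℝ := ((u:ℝ) - 1) / (r' : ℝ) with hθdef
      have hr'0 : (0:ℝ) < (r' : ℝ) := by
        have : 0 < r' := by omega
        exact_mod_cast this
      have hu1R : (1:ℝ) ≤ (u:ℝ) := by exact_mod_cast hu
      have hθ0 : 0 ≤ θ := by
        apply div_nonneg (by linarith) (le_of_lt hr'0)
      have hθ1 : θ ≤ 1 := by
        rw [div_le_one hr'0]
        have : (u:ℝ) ≤ (r':ℝ) := by exact_mod_cast hur'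
        linarith
      have key : ∀ v ∈ V, ((N.filter fun S => v ∈ S).card : ℝ) ≤
          C₁ * C₂ * (M:ℝ) ^ (((r':ℝ)/(u:ℝ)) * (1 - θ)) *
            ((B.filter fun b => v ∈ b).card : ℝ) := by
        intro v hv
        set dv := (B.filter fun b => v ∈ b).card with hdv
        set Bv := (B.filter fun b => v ∈ b).image (fun b => b.erase v) with hBv
        have hBvcard : ∀ b ∈ Bv, b.card = u - 1 := by
          intro b hb
          rw [hBv, Finset.mem_image] at hb
          obtain ⟨c, hc, rfl⟩ := hb
          rw [Finset.mem_filter] at hc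
          rw [Finset.card_erase_of_mem hc.2, hB c hc.1]
        have hBvle : Bv.card ≤ dv := Finset.card_image_le
        -- injection (a)
        have ha : (N.filter fun S => v ∈ S).card ≤ (cliqueFinset B u r').card := by
          apply Finset.card_le_card_of_injOn (fun S => S.erase v)
          · intro S hS
            simp only [Finset.mem_coe, Finset.mem_filter] at hS ⊢
            rw [mem_cliqueFinset hu hur']
            constructor
            · rw [Finset.card_erase_of_mem hS.2, hNcard S hS.1]
            · intro T hT hTc
              exact hNmem S hS.1 T (hT.trans (Finset.erase_subset _ _)) hTc
          · intro S₁ h₁ S₂ h₂ h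
            simp only [Finset.coe_filter, Set.mem_setOf_eq] at h₁ h₂
            have h' : S₁.erase v = S₂.erase v := h
            rw [← Finset.insert_erase h₁.2, ← Finset.insert_erase h₂.2, h']
        -- injection (b)
        have hb : (N.filter fun S => v ∈ S).card ≤ (cliqueFinset Bv (u-1) r').card := by
          apply Finset.card_le_card_of_injOn (fun S => S.erase v)
          · intro S hS
            simp only [Finset.mem_coe, Finset.mem_filter] at hS ⊢
            rw [mem_cliqueFinset (by omega) (by omega)]
            constructor
            · rw [Finset.card_erase_of_mem hS.2, hNcard S hS.1]
            · intro T hT hTc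
              have hvT : v ∉ T := fun h => (Finset.mem_erase.1 (hT h)).1 rfl
              have hins : insert v T ⊆ S := by
                intro x hx; rcases Finset.mem_insert.1 hx with rfl | hx
                · exact hS.2
                · exact (Finset.erase_subset _ _) (hT hx)
              have hinsc : (insert v T).card = u := by
                rw [Finset.card_insert_of_notMem hvT, hTc]; omega
              have : insert v T ∈ B := hNmem S hS.1 _ hins hinsc
              rw [hBv, Finset.mem_image]
              exact ⟨insert v T, Finset.mem_filter.2 ⟨this, Finset.mem_insert_self _ _⟩,
                by rw [Finset.erase_insert hvT]⟩
          · intro S₁ h₁ S₂ h₂ h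
            simp only [Finset.coe_filter, Set.mem_setOf_eq] at h₁ h₂
            have h' : S₁.erase v = S₂.erase v := h
            rw [← Finset.insert_erase h₁.2, ← Finset.insert_erase h₂.2, h']
        have hA : ((cliqueFinset B u r').card : ℝ) ≤ C₁ * (M:ℝ) ^ ((r':ℝ)/(u:ℝ)) := H₁ B hB
        have hBb : ((cliqueFinset Bv (u-1) r').card : ℝ) ≤ C₂ * (dv:ℝ) ^ ((r':ℝ)/((u-1:ℕ):ℝ)) := by
          refine le_trans (H₂ Bv hBvcard) ?_
          have : ((Bv.card:ℝ)) ≤ (dv:ℝ) := by exact_mod_cast hBvle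
          exact mul_le_mul_of_nonneg_left
            (Real.rpow_le_rpow (Nat.cast_nonneg _) this (by positivity)) (by linarith)
        have hmin : ((N.filter fun S => v ∈ S).card : ℝ) ≤
            min (C₁ * (M:ℝ) ^ ((r':ℝ)/(u:ℝ))) (C₂ * (dv:ℝ) ^ ((r':ℝ)/((u-1:ℕ):ℝ))) := by
          apply le_min
          · exact le_trans (by exact_mod_cast ha) hA
          · exact le_trans (by exact_mod_cast hb) hBb
        have hx : (0:ℝ) ≤ C₁ * (M:ℝ) ^ ((r':ℝ)/(u:ℝ)) :=
          mul_nonneg (by linarith) (Real.rpow_nonneg (Nat.cast_nonneg _) _)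
        have hy : (0:ℝ) ≤ C₂ * (dv:ℝ) ^ ((r':ℝ)/((u-1:ℕ):ℝ)) :=
          mul_nonneg (by linarith) (Real.rpow_nonneg (Nat.cast_nonneg _) _)
        refine le_trans hmin (le_trans (min_le_rpow_mul hx hy hθ0 hθ1) ?_)
        -- now simplify the product
        have hu1ne : ((u-1:ℕ):ℝ) ≠ 0 := by
          have : (1:ℕ) ≤ u - 1 := by omega
          have : (1:ℝ) ≤ ((u-1:ℕ):ℝ) := by exact_mod_cast this
          linarith
        have e1 : (C₁ * (M:ℝ) ^ ((r':ℝ)/(u:ℝ))) ^ (1-θ)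
            = C₁ ^ (1-θ) * ((M:ℝ) ^ ((r':ℝ)/(u:ℝ))) ^ (1-θ) :=
          Real.mul_rpow (by linarith) (Real.rpow_nonneg (Nat.cast_nonneg _) _)
        have e2 : (C₂ * (dv:ℝ) ^ ((r':ℝ)/((u-1:ℕ):ℝ))) ^ θ
            = C₂ ^ θ * ((dv:ℝ) ^ ((r':ℝ)/((u-1:ℕ):ℝ))) ^ θ :=
          Real.mul_rpow (by linarith) (Real.rpow_nonneg (Nat.cast_nonneg _) _)
        have e3 : ((M:ℝ) ^ ((r':ℝ)/(u:ℝ))) ^ (1-θ) = (M:ℝ) ^ (((r':ℝ)/(u:ℝ)) * (1-θ)) := by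
          rw [← Real.rpow_mul (Nat.cast_nonneg _)]
        have e4 : ((dv:ℝ) ^ ((r':ℝ)/((u-1:ℕ):ℝ))) ^ θ = (dv:ℝ) := by
          rw [← Real.rpow_mul (Nat.cast_nonneg _)]
          have : ((r':ℝ)/((u-1:ℕ):ℝ)) * θ = 1 := by
            rw [hθdef]
            have hcast : ((u-1:ℕ):ℝ) = (u:ℝ) - 1 := by
              rw [Nat.cast_sub hu, Nat.cast_one]
            have hune : (u:ℝ) - 1 ≠ 0 := by
              have h1u : (1:ℝ) < (u:ℝ) := by exact_mod_cast hu2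
              linarith
            rw [hcast, div_mul_div_comm, mul_comm ((r':ℝ)) ((u:ℝ)-1),
              div_self (mul_ne_zero hune (ne_of_gt hr'0))]
          rw [this, Real.rpow_one]
        have e5 : C₁ ^ (1-θ) ≤ C₁ := by
          calc C₁ ^ (1-θ) ≤ C₁ ^ (1:ℝ) :=
              Real.rpow_le_rpow_of_exponent_le hC₁ (by linarith)
            _ = C₁ := Real.rpow_one C₁
        have e6 : C₂ ^ θ ≤ C₂ := by
          calc C₂ ^ θ ≤ C₂ ^ (1:ℝ) :=
              Real.rpow_le_rpow_of_exponent_le hC₂ hθ1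
            _ = C₂ := Real.rpow_one C₂
        rw [e1, e2, e3, e4]
        have h01 : (0:ℝ) ≤ (M:ℝ) ^ (((r':ℝ)/(u:ℝ)) * (1-θ)) := Real.rpow_nonneg (Nat.cast_nonneg _) _
        have h02 : (0:ℝ) ≤ (dv:ℝ) := Nat.cast_nonneg _
        have h04 : (0:ℝ) ≤ C₂ ^ θ := Real.rpow_nonneg (by linarith) _
        have hP : C₁ ^ (1-θ) * C₂ ^ θ ≤ C₁ * C₂ := mul_le_mul e5 e6 h04 (by linarith)
        calc C₁ ^ (1-θ) * (M:ℝ) ^ (((r':ℝ)/(u:ℝ)) * (1-θ)) * (C₂ ^ θ * (dv:ℝ))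
            = (C₁ ^ (1-θ) * C₂ ^ θ) * ((M:ℝ) ^ (((r':ℝ)/(u:ℝ)) * (1-θ)) * (dv:ℝ)) := by ring
          _ ≤ (C₁ * C₂) * ((M:ℝ) ^ (((r':ℝ)/(u:ℝ)) * (1-θ)) * (dv:ℝ)) :=
              mul_le_mul_of_nonneg_right hP (mul_nonneg h01 h02)
          _ = C₁ * C₂ * (M:ℝ) ^ (((r':ℝ)/(u:ℝ)) * (1-θ)) * (dv:ℝ) := by ring
      -- sum over vertices
      have hsum1 : ∑ v ∈ V, (N.filter fun S => v ∈ S).card = r * N.card :=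
        sum_count hNsub hNcard
      have hsum2 : ∑ v ∈ V, (B.filter fun b => v ∈ b).card = u * M := by
        apply sum_count
        · intro b hb
          exact Finset.le_sup (f := id) hb
        · exact hB
      have hsumR : ((r * N.card : ℕ) : ℝ) ≤
          C₁ * C₂ * (M:ℝ) ^ (((r':ℝ)/(u:ℝ)) * (1 - θ)) * ((u * M : ℕ) : ℝ) := by
        rw [← hsum1, ← hsum2]
        push_cast
        rw [Finset.mul_sum]
        exact Finset.sum_le_sum key
      -- conclude
      have ha0 : 0 ≤ ((r':ℝ)/(u:ℝ)) * (1-θ) := by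
        apply mul_nonneg (div_nonneg (Nat.cast_nonneg _) (Nat.cast_nonneg _))
        linarith
      have hexp : ((r':ℝ)/(u:ℝ)) * (1-θ) + 1 = (r:ℝ)/(u:ℝ) := by
        have hrc : (r:ℝ) = (r':ℝ) + 1 := by exact_mod_cast hrr
        have hune : (u:ℝ) ≠ 0 := by positivity
        rw [hθdef, hrc]
        field_simp
        ring
      have hMsplit : (M:ℝ) ^ ((r:ℝ)/(u:ℝ))
          = (M:ℝ) ^ (((r':ℝ)/(u:ℝ)) * (1-θ)) * (M:ℝ) := by
        rw [← hexp, Real.rpow_add' (Nat.cast_nonneg _) (by positivity), Real.rpow_one]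
      have hr1 : (1:ℝ) ≤ (r:ℝ) := by
        have : 1 ≤ r := by omega
        exact_mod_cast this
      have hNc0 : (0:ℝ) ≤ (N.card:ℝ) := Nat.cast_nonneg _
      push_cast at hsumR
      calc ((cliqueFinset B u r).card : ℝ)
          = (N.card : ℝ) := rfl
        _ ≤ (r:ℝ) * (N.card:ℝ) := by nlinarith
        _ ≤ C₁ * C₂ * (M:ℝ) ^ (((r':ℝ)/(u:ℝ)) * (1 - θ)) * ((u:ℝ) * (M:ℝ)) := hsumR
        _ = C₁ * C₂ * (u:ℝ) * ((M:ℝ) ^ (((r':ℝ)/(u:ℝ)) * (1 - θ)) * (M:ℝ)) := by ring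
        _ = C₁ * C₂ * (u:ℝ) * (M:ℝ) ^ ((r:ℝ)/(u:ℝ)) := by rw [← hMsplit]

lemma SComplex.ext' {F G : SComplex} (h : F.faces = G.faces) : F = G := by
  cases F; cases G; simpa using h

/-- The full `q`-skeleton complex on a vertex finset `S`. -/
def skelOn (q : ℕ) (S : Finset ℕ) : SComplex :=
  if h : S.Nonempty then
    { faces := S.powerset.filter fun T => T ≠ ∅ ∧ T.card ≤ q + 1
      faces_nonempty := ⟨{h.choose}, by
        simp only [Finset.mem_filter, Finset.mem_powerset]
        refine ⟨Finset.singleton_subset_iff.2 h.choose_spec, by simp, by simp⟩⟩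
      empty_not_mem := by simp
      down_closed := by
        intro s hs t hts htne
        simp only [Finset.mem_filter, Finset.mem_powerset] at hs ⊢
        exact ⟨hts.trans hs.1, htne, le_trans (Finset.card_le_card hts) hs.2.2⟩ }
  else simplexComplex 0

lemma skelOn_faces {S : Finset ℕ} (h : S.Nonempty) (q : ℕ) :
    (skelOn q S).faces = S.powerset.filter fun T => T ≠ ∅ ∧ T.card ≤ q + 1 := by
  rw [skelOn, dif_pos h]

lemma skelOn_verts {S : Finset ℕ} (h : S.Nonempty) (q : ℕ) :
    (skelOn q S).verts = S := by
  apply Finset.Subset.antisymm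
  · intro v hv
    obtain ⟨b, hb, hvb⟩ := Finset.mem_sup.1 hv
    rw [skelOn_faces h] at hb
    exact (Finset.mem_powerset.1 (Finset.mem_filter.1 hb).1) hvb
  · intro v hv
    apply Finset.mem_sup.2
    refine ⟨{v}, ?_, Finset.mem_singleton_self v⟩
    rw [skelOn_faces h]
    simp [Finset.singleton_subset_iff.2 hv]

lemma H_faces (k q : ℕ) :
    ((simplexComplex k).skeleton q).faces
      = (Finset.Icc 1 (k+1)).powerset.filter fun T => T ≠ ∅ ∧ T.card ≤ q + 1 := by
  show ((((Finset.Icc 1 (k + 1)).powerset.filter fun s => s ≠ ∅)).filter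
      fun s => s.card ≤ q + 1) = _
  ext T
  simp only [Finset.mem_filter, Finset.mem_powerset]
  tauto

lemma Icc_one_nonempty (k : ℕ) : (Finset.Icc 1 (k+1)).Nonempty :=
  ⟨1, Finset.mem_Icc.2 ⟨le_refl 1, by omega⟩⟩

lemma H_eq_skelOn (k q : ℕ) :
    (simplexComplex k).skeleton q = skelOn q (Finset.Icc 1 (k+1)) :=
  SComplex.ext' (by rw [H_faces, skelOn_faces (Icc_one_nonempty k)])

lemma H_verts (k q : ℕ) : ((simplexComplex k).skeleton q).verts = Finset.Icc 1 (k+1) := by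
  rw [H_eq_skelOn, skelOn_verts (Icc_one_nonempty k)]

lemma image_skel {φ : ℕ → ℕ} {W : Finset ℕ} (hinj : Set.InjOn φ ↑W) (q : ℕ) :
    (W.powerset.filter fun T => T ≠ ∅ ∧ T.card ≤ q + 1).image (Finset.image φ)
      = (W.image φ).powerset.filter fun T => T ≠ ∅ ∧ T.card ≤ q + 1 := by
  ext T
  simp only [Finset.mem_image, Finset.mem_filter, Finset.mem_powerset]
  constructor
  · rintro ⟨T₀, ⟨hsub, hne, hcard⟩, rfl⟩
    refine ⟨Finset.image_subset_image hsub, ?_, ?_⟩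
    · intro h
      apply hne
      rw [← Finset.card_eq_zero]
      rw [← Finset.card_image_of_injOn (hinj.mono (by exact_mod_cast hsub)), h,
        Finset.card_empty]
    · rw [Finset.card_image_of_injOn (hinj.mono (by exact_mod_cast hsub))]
      exact hcard
  · rintro ⟨hsub, hne, hcard⟩
    refine ⟨W.filter fun v => φ v ∈ T, ⟨Finset.filter_subset _ _, ?_, ?_⟩, ?_⟩
    · intro h
      apply hne
      rw [← Finset.subset_empty]
      intro x hx
      obtain ⟨v, hvW, rfl⟩ := Finset.mem_image.1 (hsub hx)
      have : v ∈ W.filter fun v => φ v ∈ T := Finset.mem_filter.2 ⟨hvW, hx⟩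
      rw [h] at this
      exact absurd this (Finset.notMem_empty v)
    · calc (W.filter fun v => φ v ∈ T).card
          = ((W.filter fun v => φ v ∈ T).image φ).card := by
            rw [Finset.card_image_of_injOn
              (hinj.mono (by exact_mod_cast Finset.filter_subset _ _))]
        _ ≤ T.card := by
            apply Finset.card_le_card
            intro x hx
            obtain ⟨v, hv, rfl⟩ := Finset.mem_image.1 hx
            exact (Finset.mem_filter.1 hv).2
        _ ≤ q + 1 := hcard
    · apply Finset.Subset.antisymm
      · intro x hx
        obtain ⟨v, hv, rfl⟩ := Finset.mem_image.1 hx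
        exact (Finset.mem_filter.1 hv).2
      · intro x hx
        obtain ⟨v, hvW, rfl⟩ := Finset.mem_image.1 (hsub hx)
        exact Finset.mem_image.2 ⟨v, Finset.mem_filter.2 ⟨hvW, hx⟩, rfl⟩

lemma mem_simplices {F : SComplex} {T : Finset ℕ} {i : ℕ} :
    T ∈ F.simplices i ↔ T ∈ F.faces ∧ T.card = i + 1 := Finset.mem_filter

/-- The subcomplexes of `F` isomorphic to the `q`-skeleton of `σ_k` are exactly the full
`q`-skeletons of the `(k+1)`-cliques of the family of `q`-simplices of `F`. -/
lemma copies_eq_image (F : SComplex) (k q : ℕ) (hq1 : 1 ≤ q) (hqk : q ≤ k) :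
    {G : SComplex | G.IsSubcomplex F ∧ G.Iso ((simplexComplex k).skeleton q)}
      = skelOn q '' ↑(cliqueFinset (F.simplices q) (q+1) (k+1)) := by
  have hW : (Finset.Icc 1 (k+1)).card = k + 1 := by rw [Nat.card_Icc]; omega
  ext G
  simp only [Set.mem_setOf_eq, Set.mem_image, Finset.mem_coe]
  constructor
  · rintro ⟨hsub, φ, hinj, hfaces⟩
    rw [H_verts] at hinj
    rw [H_faces] at hfaces
    set S := (Finset.Icc 1 (k+1)).image φ with hS
    have hScard : S.card = k + 1 := by
      rw [hS, Finset.card_image_of_injOn hinj, hW]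
    have hSne : S.Nonempty := Finset.card_pos.1 (by omega)
    have hGfaces : G.faces = S.powerset.filter fun T => T ≠ ∅ ∧ T.card ≤ q + 1 := by
      rw [hfaces, image_skel hinj]
    refine ⟨S, ?_, (SComplex.ext' (by rw [hGfaces, skelOn_faces hSne])).symm⟩
    rw [mem_cliqueFinset (by omega) (by omega)]
    refine ⟨hScard, fun T hT hTc => ?_⟩
    have hTG : T ∈ G.faces := by
      rw [hGfaces, Finset.mem_filter, Finset.mem_powerset]
      refine ⟨hT, ?_, by omega⟩
      intro h; rw [h] at hTc; simp at hTc
    exact mem_simplices.2 ⟨hsub hTG, hTc⟩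
  · rintro ⟨S, hSmem, rfl⟩
    rw [mem_cliqueFinset (by omega) (by omega)] at hSmem
    obtain ⟨hScard, hclique⟩ := hSmem
    have hSne : S.Nonempty := Finset.card_pos.1 (by omega)
    constructor
    · -- subcomplex
      intro T hT
      rw [skelOn_faces hSne, Finset.mem_filter, Finset.mem_powerset] at hT
      obtain ⟨hTS, hTne, hTcard⟩ := hT
      obtain ⟨T', hTT', hT'S, hT'card⟩ :=
        Finset.exists_subsuperset_card_eq hTS hTcard (by omega)
      have : T' ∈ F.faces := (mem_simplices.1 (hclique T' hT'S hT'card)).1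
      exact F.down_closed T' this T hTT' hTne
    · -- iso
      have hcards : (Finset.Icc 1 (k+1)).card = S.card := by rw [hW, hScard]
      set e := Finset.equivOfCardEq hcards with he
      set φ : ℕ → ℕ := fun v => if hv : v ∈ Finset.Icc 1 (k+1) then (e ⟨v, hv⟩ : ℕ) else 0
        with hφ
      have hinj : Set.InjOn φ ↑(Finset.Icc 1 (k+1)) := by
        intro v₁ h₁ v₂ h₂ hval
        rw [Finset.mem_coe] at h₁ h₂
        rw [hφ] at hval
        simp only [dif_pos h₁, dif_pos h₂] at hval
        have : e ⟨v₁, h₁⟩ = e ⟨v₂, h₂⟩ := Subtype.ext hval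
        have := e.injective this
        exact congrArg Subtype.val this
      have himg : (Finset.Icc 1 (k+1)).image φ = S := by
        apply Finset.eq_of_subset_of_card_le
        · intro x hx
          obtain ⟨v, hv, rfl⟩ := Finset.mem_image.1 hx
          rw [hφ]
          simp only [dif_pos hv]
          exact (e ⟨v, hv⟩).2
        · rw [Finset.card_image_of_injOn hinj, hW, hScard]
      refine ⟨φ, ?_, ?_⟩
      · rw [H_verts]; exact hinj
      · rw [H_faces, image_skel hinj, himg, skelOn_faces hSne]

lemma nCopies_eq_card_clique (F : SComplex) (k q : ℕ) (hq1 : 1 ≤ q) (hqk : q ≤ k) :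
    nCopies F ((simplexComplex k).skeleton q)
      = (cliqueFinset (F.simplices q) (q+1) (k+1)).card := by
  rw [nCopies, copies_eq_image F k q hq1 hqk, Set.ncard_image_of_injOn, Set.ncard_coe_finset]
  intro S₁ h₁ S₂ h₂ h
  rw [Finset.mem_coe, mem_cliqueFinset (by omega) (by omega)] at h₁ h₂
  have h₁ne : S₁.Nonempty := Finset.card_pos.1 (by omega)
  have h₂ne : S₂.Nonempty := Finset.card_pos.1 (by omega)
  rw [← skelOn_verts h₁ne q, ← skelOn_verts h₂ne q, h]

lemma card_verts (F : SComplex) : F.verts.card = F.s 0 := by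
  rw [s, simplices]
  apply Finset.card_bij (fun v _ => ({v} : Finset ℕ))
  · intro v hv
    obtain ⟨b, hb, hvb⟩ := Finset.mem_sup.1 hv
    simp only [Finset.mem_filter]
    exact ⟨F.down_closed b hb {v} (Finset.singleton_subset_iff.2 hvb) (by simp),
      Finset.card_singleton v⟩
  · intro a _ b _ h
    exact Finset.singleton_injective h
  · intro t ht
    simp only [Finset.mem_filter] at ht
    obtain ⟨v, rfl⟩ := Finset.card_eq_one.1 ht.2
    exact ⟨v, Finset.mem_sup.2 ⟨{v}, ht.1, Finset.mem_singleton_self v⟩, rfl⟩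

lemma s_simplexComplex (m i : ℕ) : (simplexComplex m).s i = (m+1).choose (i+1) := by
  rw [s, simplices]
  have h : ((simplexComplex m).faces.filter fun s => s.card = i + 1)
      = (Finset.Icc 1 (m+1)).powersetCard (i+1) := by
    ext T
    simp only [simplexComplex, Finset.mem_filter, Finset.mem_powerset,
      Finset.mem_powersetCard]
    constructor
    · rintro ⟨⟨h1, _⟩, h3⟩; exact ⟨h1, h3⟩
    · rintro ⟨h1, h2⟩
      refine ⟨⟨h1, ?_⟩, h2⟩
      intro he; rw [he] at h2; simp at h2
  rw [h, Finset.card_powersetCard, Nat.card_Icc]; norm_num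

lemma clique_ge (t k q : ℕ) (ht : 1 ≤ t) (hqk : q ≤ k) :
    t.choose (k+1) ≤ (cliqueFinset ((simplexComplex (t-1)).simplices q) (q+1) (k+1)).card := by
  have hIcc : (1:ℕ) + ((t-1)+1) - 1 = t := by omega
  have hIcc2 : Finset.Icc 1 ((t-1)+1) = Finset.Icc 1 t := by congr 1; omega
  have hc : ((Finset.Icc 1 t).powersetCard (k+1)).card = t.choose (k+1) := by
    rw [Finset.card_powersetCard, Nat.card_Icc]
    norm_num
  rw [← hc]
  apply Finset.card_le_card
  intro S hS
  rw [Finset.mem_powersetCard] at hS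
  rw [mem_cliqueFinset (by omega) (by omega)]
  refine ⟨hS.2, fun T hT hTc => ?_⟩
  rw [mem_simplices]
  refine ⟨?_, hTc⟩
  show T ∈ (Finset.Icc 1 ((t-1)+1)).powerset.filter (· ≠ ∅)
  rw [Finset.mem_filter, Finset.mem_powerset, hIcc2]
  refine ⟨hT.trans hS.1, ?_⟩
  intro h; rw [h] at hTc; simp at hTc

lemma nCopies_le_choose (F : SComplex) (k q n : ℕ) (hq1 : 1 ≤ q) (hqk : q ≤ k)
    (h0 : F.s 0 ≤ n) :
    nCopies F ((simplexComplex k).skeleton q) ≤ n.choose (k+1) := by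
  rw [nCopies_eq_card_clique F k q hq1 hqk]
  have h1 : cliqueFinset (F.simplices q) (q+1) (k+1)
      ⊆ ((F.simplices q).sup id).powersetCard (k+1) := Finset.filter_subset _ _
  calc (cliqueFinset (F.simplices q) (q+1) (k+1)).card
      ≤ (((F.simplices q).sup id).powersetCard (k+1)).card := Finset.card_le_card h1
    _ = ((F.simplices q).sup id).card.choose (k+1) := Finset.card_powersetCard _ _
    _ ≤ n.choose (k+1) := by
        apply Nat.choose_le_choose
        have hsub2 : F.simplices q ⊆ F.faces := fun x hx => (Finset.mem_filter.1 hx).1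
        have hsup : (F.simplices q).sup id ⊆ F.faces.sup id := by
          intro v hv
          obtain ⟨b, hb, hvb⟩ := Finset.mem_sup.1 hv
          exact Finset.mem_sup.2 ⟨b, hsub2 hb, hvb⟩
        exact le_trans (Finset.card_le_card hsup) (le_trans (le_of_eq (card_verts F)) h0)

lemma root_le {x y : ℝ} (hx : 0 ≤ x) (hy : 0 ≤ y) {m : ℕ} (hm : 1 ≤ m)
    (h : x ^ m ≤ y) : x ≤ y ^ (1/(m:ℝ)) := by
  have hmne : (m:ℝ) ≠ 0 := by positivity
  have h1 : x = (x ^ m) ^ (1/(m:ℝ)) := by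
    rw [← Real.rpow_natCast x m, ← Real.rpow_mul hx, mul_one_div, div_self hmne,
      Real.rpow_one]
  rw [h1]
  exact Real.rpow_le_rpow (by positivity) h (by positivity)

lemma eventually_rpow_ge (x : ℝ) (hx : 0 < x) (b : ℝ) :
    ∃ N : ℕ, ∀ n : ℕ, N ≤ n → b ≤ (n:ℝ) ^ x := by
  have h : Filter.Tendsto (fun n : ℕ => (n:ℝ) ^ x) Filter.atTop Filter.atTop :=
    (tendsto_rpow_atTop hx).comp tendsto_natCast_atTop_atTop
  exact Filter.eventually_atTop.1 (h.eventually_ge_atTop b)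

lemma Nmax_eq_sSup (m : ℕ → ℕ) (k : ℕ) (G : SComplex) :
    Nmax m k G = sSup {t : ℕ | ∃ F : SComplex, (∀ i ≤ k, F.s i ≤ m i) ∧ t = nCopies F G} :=
  rfl

end Stmt11

set_option maxHeartbeats 2000000 in
/-- bounds on `K_H` for the `q`-skeleton `H` of `σ_k`, from the proof of
Proposition `prop:simplex`: with `p_i = n^{-α_i}`, `q = min{i ≥ 1 : α_i > 0} ≤ k` and the
subcriticality condition, setting
`K_H = max{m ≤ C(n,k+1) : N(n, mC(k+1,2), …, mC(k+1,q+1); H) ≤ n^{k+1-C(k+1,q+1)α_q}}`,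
there is a constant `C ≥ 1` depending only on `k` such that for all `n` large enough,
`C⁻¹ n^{q+1-C(k,q)α_q} ≤ K_H ≤ C n^{q+1-C(k,q)α_q}`. -/
theorem stmt_11 (k q : ℕ) (hk : 1 ≤ k)
    (α : ℕ → ℝ) (hα : ∀ i, 0 ≤ α i)
    (hq1 : 1 ≤ q) (hqpos : 0 < α q) (hqmin : ∀ i, 1 ≤ i → i < q → α i = 0)
    (hqk : q ≤ k)
    (hsub : ∑ i ∈ Finset.Icc 1 k, (k.choose i : ℝ) * α i < 1) :
    ∃ C : ℝ, 1 ≤ C ∧ ∃ N : ℕ, ∀ n : ℕ, N ≤ n →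
      C⁻¹ * (n : ℝ) ^ ((q : ℝ) + 1 - (k.choose q : ℝ) * α q) ≤
        ((sSup {m : ℕ | m ≤ n.choose (k + 1) ∧
          (Nmax (fun i => if i = 0 then n else m * (k + 1).choose (i + 1)) q
              ((simplexComplex k).skeleton q) : ℝ) ≤
            (n : ℝ) ^ ((k : ℝ) + 1 - ((k + 1).choose (q + 1) : ℝ) * α q)} : ℕ) : ℝ) ∧
      ((sSup {m : ℕ | m ≤ n.choose (k + 1) ∧
          (Nmax (fun i => if i = 0 then n else m * (k + 1).choose (i + 1)) q
              ((simplexComplex k).skeleton q) : ℝ) ≤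
            (n : ℝ) ^ ((k : ℝ) + 1 - ((k + 1).choose (q + 1) : ℝ) * α q)} : ℕ) : ℝ) ≤
        C * (n : ℝ) ^ ((q : ℝ) + 1 - (k.choose q : ℝ) * α q) := by
  classical
  -- clique-counting constant
  obtain ⟨CK, hCK1, hCK⟩ := Stmt11.clique_bound (k+1) (q+1) (by omega) (by omega)
  have hexpcast : (((k+1:ℕ)):ℝ) / (((q+1:ℕ)):ℝ) = ((k:ℝ)+1)/((q:ℝ)+1) := by push_cast; ring
  simp only [hexpcast] at hCK
  set γ : ℝ := ((k:ℝ)+1)/((q:ℝ)+1) with hγdef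
  have hq1R : (1:ℝ) ≤ (q:ℝ) := by exact_mod_cast hq1
  have hqkR : (q:ℝ) ≤ (k:ℝ) := by exact_mod_cast hqk
  have hγ1 : 1 ≤ γ := by rw [hγdef, le_div_iff₀ (by linarith)]; linarith
  have hγpos : 0 < γ := by linarith
  set β : ℝ := (k.choose q : ℝ) * α q with hβdef
  have hchoosekq : (1:ℝ) ≤ (k.choose q : ℝ) := by
    exact_mod_cast Nat.succ_le_of_lt (Nat.choose_pos hqk)
  have hβpos : 0 < β := by
    rw [hβdef]; exact mul_pos (by linarith) hqpos
  have hβ1 : β < 1 := by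
    refine lt_of_le_of_lt ?_ hsub
    rw [hβdef]
    apply Finset.single_le_sum (f := fun i => (k.choose i : ℝ) * α i)
    · intro i _
      exact mul_nonneg (Nat.cast_nonneg _) (hα i)
    · exact Finset.mem_Icc.2 ⟨hq1, hqk⟩
  set e : ℝ := (q:ℝ) + 1 - β with hedef
  have hepos : 0 < e := by rw [hedef]; linarith
  have heq1 : e < (q:ℝ) + 1 := by rw [hedef]; linarith
  set E : ℝ := (k:ℝ) + 1 - ((k+1).choose (q+1) : ℝ) * α q with hEdef
  set Areal : ℝ := ((k+1).choose (q+1) : ℝ) with hAdef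
  have hA1 : (1:ℝ) ≤ Areal := by
    rw [hAdef]
    exact_mod_cast Nat.succ_le_of_lt (Nat.choose_pos (by omega))
  have hid : ((k:ℝ)+1) * (k.choose q : ℝ) = Areal * ((q:ℝ)+1) := by
    rw [hAdef]
    exact_mod_cast Nat.add_one_mul_choose_eq k q
  have h2 : β * ((k:ℝ)+1) = Areal * α q * ((q:ℝ)+1) := by
    calc β * ((k:ℝ)+1) = (((k:ℝ)+1) * (k.choose q : ℝ)) * α q := by rw [hβdef]; ring
      _ = (Areal * ((q:ℝ)+1)) * α q := by rw [hid]
      _ = Areal * α q * ((q:ℝ)+1) := by ring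
  have hq1ne : ((q:ℝ)+1) ≠ 0 := by linarith
  have hEe : e * γ = E := by
    rw [hedef, hEdef, hγdef, ← mul_div_assoc, div_eq_iff hq1ne]
    linear_combination -h2
  -- the constant c for the lower bound
  have hApow_pos : 0 < Areal ^ γ := Real.rpow_pos_of_pos (by linarith) γ
  set c : ℝ := (1/(CK * Areal ^ γ)) ^ (1/γ) with hcdef
  have hCKpos : (0:ℝ) < CK := by linarith
  have hbase_pos : (0:ℝ) < 1/(CK * Areal ^ γ) := by positivity
  have hcpos : 0 < c := Real.rpow_pos_of_pos hbase_pos _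
  have hcγ : c ^ γ = 1/(CK * Areal ^ γ) := by
    rw [hcdef, ← Real.rpow_mul (le_of_lt hbase_pos), one_div_mul_cancel (ne_of_gt hγpos),
      Real.rpow_one]
  -- the constants D and C
  set D : ℝ := 2^(k+1) * ((k+1).factorial : ℝ) with hDdef
  have hD1 : (1:ℝ) ≤ D := by
    rw [hDdef]
    have h1 : (1:ℝ) ≤ 2^(k+1) := by
      calc (1:ℝ) = 1^(k+1) := (one_pow _).symm
        _ ≤ 2^(k+1) := pow_le_pow_left₀ (by norm_num) (by norm_num) _
    have h2 : (1:ℝ) ≤ ((k+1).factorial : ℝ) := by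
      exact_mod_cast Nat.one_le_iff_ne_zero.2 (Nat.factorial_ne_zero (k+1))
    calc (1:ℝ) = 1 * 1 := by norm_num
      _ ≤ 2^(k+1) * ((k+1).factorial : ℝ) := mul_le_mul h1 h2 (by norm_num) (by linarith)
  have hDpos : (0:ℝ) < D := by linarith
  set C : ℝ := max (max ((2*(k:ℝ)+2)^(q+1)) ((2*D)^(q+1))) (max (2/c) 1) with hCdef
  have hC1 : 1 ≤ C := le_max_of_le_right (le_max_right _ _)
  refine ⟨C, hC1, ?_⟩
  -- eventual conditions
  have hδpos : 0 < 1 - e/((q:ℝ)+1) := by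
    have : e/((q:ℝ)+1) < 1 := by rw [div_lt_one (by linarith)]; exact heq1
    linarith
  obtain ⟨N₁, hN₁⟩ := Stmt11.eventually_rpow_ge (1 - e/((q:ℝ)+1)) hδpos (D+1)
  obtain ⟨N₂, hN₂⟩ := Stmt11.eventually_rpow_ge β hβpos (c*D)
  obtain ⟨N₃, hN₃⟩ := Stmt11.eventually_rpow_ge e hepos (2/c)
  refine ⟨max (max N₁ N₂) (max N₃ (2*k+2)), fun n hn => ?_⟩
  have hn1 : 1 ≤ n := by omega
  have hn2k : 2*k+2 ≤ n := le_trans (le_max_of_le_right (le_max_right _ _)) hn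
  have hnR1 : (1:ℝ) ≤ (n:ℝ) := by exact_mod_cast hn1
  have hnRpos : (0:ℝ) < (n:ℝ) := by linarith
  have hE2 : D * (n:ℝ)^(e/((q:ℝ)+1)) < (n:ℝ) := by
    have h1 : D + 1 ≤ (n:ℝ)^(1 - e/((q:ℝ)+1)) :=
      hN₁ n (le_trans (le_max_of_le_left (le_max_left _ _)) hn)
    have h2 : (0:ℝ) < (n:ℝ)^(e/((q:ℝ)+1)) := Real.rpow_pos_of_pos hnRpos _
    have h3 : (n:ℝ)^(1 - e/((q:ℝ)+1)) * (n:ℝ)^(e/((q:ℝ)+1)) = (n:ℝ) := by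
      rw [← Real.rpow_add hnRpos]
      norm_num
    calc D * (n:ℝ)^(e/((q:ℝ)+1)) < (D+1) * (n:ℝ)^(e/((q:ℝ)+1)) :=
          mul_lt_mul_of_pos_right (by linarith) h2
      _ ≤ (n:ℝ)^(1 - e/((q:ℝ)+1)) * (n:ℝ)^(e/((q:ℝ)+1)) :=
          mul_le_mul_of_nonneg_right h1 (le_of_lt h2)
      _ = (n:ℝ) := h3
  have hE3 : c*D ≤ (n:ℝ)^β :=
    hN₂ n (le_trans (le_max_of_le_left (le_max_right _ _)) hn)
  have hE4 : 2/c ≤ (n:ℝ)^e :=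
    hN₃ n (le_trans (le_max_of_le_right (le_max_left _ _)) hn)
  have hne1 : (1:ℝ) ≤ (n:ℝ)^e := by
    calc (1:ℝ) = (n:ℝ)^(0:ℝ) := (Real.rpow_zero _).symm
      _ ≤ (n:ℝ)^e := Real.rpow_le_rpow_of_exponent_le hnR1 (le_of_lt hepos)
  have hne0 : (0:ℝ) ≤ (n:ℝ)^e := by linarith
  -- general facts about the sets defining Nmax
  have hbddP : ∀ mf : ℕ → ℕ, mf 0 ≤ n →
      BddAbove {t : ℕ | ∃ F : SComplex, (∀ i ≤ q, F.s i ≤ mf i) ∧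
        t = nCopies F ((simplexComplex k).skeleton q)} := by
    intro mf hmf
    refine ⟨n.choose (k+1), fun t ht => ?_⟩
    obtain ⟨F, hF, rfl⟩ := ht
    exact Stmt11.nCopies_le_choose F k q n hq1 hqk (le_trans (hF 0 (Nat.zero_le q)) hmf)
  have hneP : ∀ mf : ℕ → ℕ, 1 ≤ mf 0 →
      ({t : ℕ | ∃ F : SComplex, (∀ i ≤ q, F.s i ≤ mf i) ∧
        t = nCopies F ((simplexComplex k).skeleton q)}).Nonempty := by
    intro mf hmf
    refine ⟨nCopies (simplexComplex 0) ((simplexComplex k).skeleton q),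
      simplexComplex 0, fun i hi => ?_, rfl⟩
    rw [Stmt11.s_simplexComplex]
    rcases Nat.eq_zero_or_pos i with rfl | hipos
    · simpa using hmf
    · have : (0+1:ℕ).choose (i+1) = 0 := Nat.choose_eq_zero_of_lt (by omega)
      omega
  have hmemP : ∀ mf : ℕ → ℕ, 1 ≤ mf 0 → mf 0 ≤ n →
      ∃ F : SComplex, (∀ i ≤ q, F.s i ≤ mf i) ∧
        Nmax mf q ((simplexComplex k).skeleton q)
          = nCopies F ((simplexComplex k).skeleton q) := by
    intro mf h1 h2
    have hmem := Nat.sSup_mem (hneP mf h1) (hbddP mf h2)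
    rw [← Stmt11.Nmax_eq_sSup] at hmem
    obtain ⟨F, hF, ht⟩ := hmem
    exact ⟨F, hF, ht⟩
  have hgeP : ∀ mf : ℕ → ℕ, mf 0 ≤ n → ∀ F : SComplex, (∀ i ≤ q, F.s i ≤ mf i) →
      nCopies F ((simplexComplex k).skeleton q) ≤ Nmax mf q ((simplexComplex k).skeleton q) := by
    intro mf h2 F hF
    rw [Stmt11.Nmax_eq_sSup]
    exact le_csSup (hbddP mf h2) ⟨F, hF, rfl⟩
  -- per-element upper bound on the number of copies
  have hPer : ∀ (m' : ℕ) (F : SComplex),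
      (∀ i ≤ q, F.s i ≤ if i = 0 then n else m' * (k+1).choose (i+1)) →
      (nCopies F ((simplexComplex k).skeleton q) : ℝ)
        ≤ CK * ((m' * (k+1).choose (q+1) : ℕ) : ℝ) ^ γ := by
    intro m' F hF
    rw [Stmt11.nCopies_eq_card_clique F k q hq1 hqk]
    have hB : ∀ b ∈ F.simplices q, b.card = q+1 := fun b hb => (Stmt11.mem_simplices.1 hb).2
    refine le_trans (hCK (F.simplices q) hB) ?_
    have hsq : (F.simplices q).card ≤ m' * (k+1).choose (q+1) := by
      have h := hF q (le_refl q)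
      rwa [if_neg (by omega)] at h
    apply mul_le_mul_of_nonneg_left _ (by linarith : (0:ℝ) ≤ CK)
    exact Real.rpow_le_rpow (Nat.cast_nonneg _) (by exact_mod_cast hsq) (by positivity)
  -- choose lower bound : n^(k+1) ≤ D * choose n (k+1)
  have hchoose_lb : ∀ t : ℕ, 2*k ≤ t → ((t:ℝ))^(k+1) ≤ D * (t.choose (k+1) : ℝ) := by
    intro t ht
    have h0 : ((t - k : ℕ) : ℝ) = (t:ℝ) - (k:ℝ) := by
      rw [Nat.cast_sub (by omega)]
    have h1 : ((t-k)^(k+1) : ℕ) ≤ (k+1).factorial * t.choose (k+1) := by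
      have h := Nat.pow_sub_le_descFactorial t (k+1)
      rw [Nat.descFactorial_eq_factorial_mul_choose] at h
      rwa [show t+1-(k+1) = t-k from by omega] at h
    have h1R : ((t:ℝ) - k)^(k+1) ≤ ((k+1).factorial : ℝ) * (t.choose (k+1) : ℝ) := by
      rw [← h0]; exact_mod_cast h1
    have htR : (2*(k:ℝ)) ≤ (t:ℝ) := by exact_mod_cast ht
    have hhalf : (t:ℝ)/2 ≤ (t:ℝ) - k := by linarith
    have h3 : ((t:ℝ)/2)^(k+1) ≤ ((t:ℝ) - k)^(k+1) :=
      pow_le_pow_left₀ (by linarith) hhalf _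
    have h4 : ((t:ℝ)/2)^(k+1) = (t:ℝ)^(k+1) / 2^(k+1) := div_pow _ _ _
    have h5 : (0:ℝ) < 2^(k+1) := by positivity
    calc ((t:ℝ))^(k+1) = 2^(k+1) * (((t:ℝ)/2)^(k+1)) := by rw [h4]; field_simp
      _ ≤ 2^(k+1) * (((k+1).factorial : ℝ) * (t.choose (k+1) : ℝ)) := by
          apply mul_le_mul_of_nonneg_left (le_trans h3 h1R) (le_of_lt h5)
      _ = D * (t.choose (k+1) : ℝ) := by rw [hDdef]; ring
  -- the candidate m₀ for the lower bound
  set m₀ : ℕ := ⌊c * (n:ℝ)^e⌋₊ with hm₀def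
  have hm₀le : (m₀:ℝ) ≤ c * (n:ℝ)^e := Nat.floor_le (by positivity)
  -- m₀ ≤ choose n (k+1)
  have hm₀choose : m₀ ≤ n.choose (k+1) := by
    have h1 : c * D * (n:ℝ)^e ≤ (n:ℝ)^β * (n:ℝ)^e := by
      apply mul_le_mul_of_nonneg_right hE3 hne0
    have h2 : (n:ℝ)^β * (n:ℝ)^e = (n:ℝ)^((q:ℝ)+1) := by
      rw [← Real.rpow_add hnRpos]
      congr 1
      rw [hedef]; ring
    have h3 : (n:ℝ)^((q:ℝ)+1) ≤ (n:ℝ)^((k:ℝ)+1) :=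
      Real.rpow_le_rpow_of_exponent_le hnR1 (by linarith)
    have h4 : (n:ℝ)^((k:ℝ)+1) = (n:ℝ)^(k+1) := by
      rw [show ((k:ℝ)+1) = ((k+1:ℕ):ℝ) from by push_cast; ring, Real.rpow_natCast]
    have h5 : (n:ℝ)^(k+1) ≤ D * (n.choose (k+1) : ℝ) := hchoose_lb n (by omega)
    have h6 : c * D * (n:ℝ)^e ≤ D * (n.choose (k+1) : ℝ) := by
      calc c * D * (n:ℝ)^e ≤ (n:ℝ)^β * (n:ℝ)^e := h1
        _ = (n:ℝ)^((q:ℝ)+1) := h2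
        _ ≤ (n:ℝ)^((k:ℝ)+1) := h3
        _ = (n:ℝ)^(k+1) := h4
        _ ≤ D * (n.choose (k+1) : ℝ) := h5
    have h7 : c * (n:ℝ)^e ≤ (n.choose (k+1) : ℝ) := by
      have := (mul_le_mul_iff_right₀ hDpos).1 (by linarith : D * (c * (n:ℝ)^e) ≤ D * (n.choose (k+1):ℝ))
      exact this
    rw [hm₀def]
    exact Nat.floor_le_of_le h7
  -- Nmax bound for m₀
  have hNm₀ : (Nmax (fun i => if i = 0 then n else m₀ * (k + 1).choose (i + 1)) q
      ((simplexComplex k).skeleton q) : ℝ) ≤ (n:ℝ)^E := by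
    obtain ⟨F, hF, hEq⟩ := hmemP (fun i => if i = 0 then n else m₀ * (k + 1).choose (i + 1))
      (by simpa using hn1) (by simp)
    rw [hEq]
    refine le_trans (hPer m₀ F hF) ?_
    have hm₀A : ((m₀ * (k+1).choose (q+1) : ℕ) : ℝ) ≤ c * (n:ℝ)^e * Areal := by
      push_cast
      rw [← hAdef]
      exact mul_le_mul_of_nonneg_right hm₀le (by linarith)
    calc CK * ((m₀ * (k+1).choose (q+1) : ℕ) : ℝ) ^ γ
        ≤ CK * (c * (n:ℝ)^e * Areal) ^ γ := by
          apply mul_le_mul_of_nonneg_left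
            (Real.rpow_le_rpow (Nat.cast_nonneg _) hm₀A (le_of_lt hγpos)) (by linarith)
      _ = CK * (c^γ * ((n:ℝ)^e)^γ * Areal^γ) := by
          rw [Real.mul_rpow (by positivity) (by linarith),
            Real.mul_rpow (le_of_lt hcpos) (by positivity)]
      _ = ((n:ℝ)^e)^γ := by
          rw [hcγ]
          field_simp
      _ = (n:ℝ)^E := by rw [← Real.rpow_mul (le_of_lt hnRpos), hEe]
  have hm₀mem : m₀ ∈ {m : ℕ | m ≤ n.choose (k + 1) ∧
      (Nmax (fun i => if i = 0 then n else m * (k + 1).choose (i + 1)) q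
          ((simplexComplex k).skeleton q) : ℝ) ≤ (n : ℝ) ^ E} := ⟨hm₀choose, hNm₀⟩
  have hbddA : BddAbove {m : ℕ | m ≤ n.choose (k + 1) ∧
      (Nmax (fun i => if i = 0 then n else m * (k + 1).choose (i + 1)) q
          ((simplexComplex k).skeleton q) : ℝ) ≤ (n : ℝ) ^ E} :=
    ⟨n.choose (k+1), fun m hm => hm.1⟩
  set KH : ℕ := sSup {m : ℕ | m ≤ n.choose (k + 1) ∧
      (Nmax (fun i => if i = 0 then n else m * (k + 1).choose (i + 1)) q
          ((simplexComplex k).skeleton q) : ℝ) ≤ (n : ℝ) ^ E} with hKHdef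
  have hKHmem := Nat.sSup_mem ⟨m₀, hm₀mem⟩ hbddA
  rw [← hKHdef] at hKHmem
  obtain ⟨hKHchoose, hKHN⟩ := hKHmem
  have hm₀KH : m₀ ≤ KH := le_csSup hbddA hm₀mem
  constructor
  · -- lower bound
    have hflgt : c * (n:ℝ)^e - 1 < (m₀:ℝ) := Nat.sub_one_lt_floor _
    have hcX : 2 ≤ c * (n:ℝ)^e := by
      have := mul_le_mul_of_nonneg_left hE4 (le_of_lt hcpos)
      rwa [mul_div_cancel₀ 2 (ne_of_gt hcpos)] at this
    have hCinv : C⁻¹ ≤ c/2 := by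
      have h2c : (0:ℝ) < 2/c := by positivity
      have hC2c : 2/c ≤ C := le_max_of_le_right (le_max_left _ _)
      calc C⁻¹ ≤ (2/c)⁻¹ := by
            apply inv_anti₀ h2c hC2c
        _ = c/2 := by rw [inv_div]
    have h1 : C⁻¹ * (n:ℝ)^e ≤ (c/2) * (n:ℝ)^e := mul_le_mul_of_nonneg_right hCinv hne0
    have h2 : (c/2) * (n:ℝ)^e ≤ c * (n:ℝ)^e - 1 := by linarith
    have h3 : (m₀:ℝ) ≤ (KH:ℝ) := by exact_mod_cast hm₀KH
    linarith
  · -- upper bound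
    rcases Nat.eq_zero_or_pos KH with hKH0 | hKH1
    · rw [hKH0]
      simp only [Nat.cast_zero]
      positivity
    have hKR1 : (1:ℝ) ≤ (KH:ℝ) := by exact_mod_cast hKH1
    set rK : ℝ := (KH:ℝ)^(1/((q:ℝ)+1)) with hrKdef
    have hrK1 : (1:ℝ) ≤ rK := by
      rw [hrKdef]
      calc (1:ℝ) = (1:ℝ)^(1/((q:ℝ)+1)) := (Real.one_rpow _).symm
        _ ≤ (KH:ℝ)^(1/((q:ℝ)+1)) := Real.rpow_le_rpow (by norm_num) hKR1 (by positivity)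
    set fl : ℕ := ⌊rK⌋₊ with hfldef
    have hfl1 : 1 ≤ fl := Nat.le_floor (by exact_mod_cast hrK1)
    set T : ℕ := min n fl with hTdef
    have hT1 : 1 ≤ T := le_min hn1 hfl1
    have hTn : T ≤ n := min_le_left _ _
    have hTfl : T ≤ fl := min_le_right _ _
    have hrKpow : rK ^ (q+1) = (KH:ℝ) := by
      rw [hrKdef, ← Real.rpow_natCast ((KH:ℝ)^(1/((q:ℝ)+1))) (q+1), ← Real.rpow_mul
        (Nat.cast_nonneg _)]
      rw [show (1/((q:ℝ)+1)) * ((q+1:ℕ):ℝ) = 1 from by push_cast; field_simp]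
      exact Real.rpow_one _
    have hTpow : T^(q+1) ≤ KH := by
      have h1 : (T:ℝ) ≤ rK := le_trans (by exact_mod_cast hTfl) (Nat.floor_le (by linarith))
      have h2 : (T:ℝ)^(q+1) ≤ rK^(q+1) := pow_le_pow_left₀ (Nat.cast_nonneg _) h1 _
      rw [hrKpow] at h2
      exact_mod_cast h2
    -- the complete complex on T vertices is admissible
    set F : SComplex := simplexComplex (T-1) with hFdef
    have hsF : ∀ i, F.s i = T.choose (i+1) := by
      intro i
      rw [hFdef, Stmt11.s_simplexComplex]
      congr 2
      omega
    have hadm : ∀ i ≤ q, F.s i ≤ if i = 0 then n else KH * (k+1).choose (i+1) := by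
      intro i hi
      rw [hsF]
      rcases Nat.eq_zero_or_pos i with rfl | hipos
      · simpa [Nat.choose_one_right] using hTn
      · rw [if_neg (by omega)]
        calc T.choose (i+1) ≤ T^(i+1) := Nat.choose_le_pow _ _
          _ ≤ T^(q+1) := Nat.pow_le_pow_right hT1 (by omega)
          _ ≤ KH := hTpow
          _ ≤ KH * (k+1).choose (i+1) :=
              Nat.le_mul_of_pos_right KH (Nat.choose_pos (by omega))
    have hTchoose : (T.choose (k+1) : ℝ) ≤ (n:ℝ)^E := by
      have h1 : T.choose (k+1) ≤ nCopies F ((simplexComplex k).skeleton q) := by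
        rw [Stmt11.nCopies_eq_card_clique F k q hq1 hqk, hFdef]
        exact Stmt11.clique_ge T k q hT1 hqk
      have h2 := hgeP (fun i => if i = 0 then n else KH * (k+1).choose (i+1))
        (by simp) F hadm
      exact le_trans (by exact_mod_cast le_trans h1 h2) hKHN
    have hKup : (KH:ℝ) ≤ ((T:ℝ)+1)^(q+1) := by
      have h1 : rK < (fl:ℝ) + 1 := Nat.lt_floor_add_one rK
      have h2 : rK ≤ (T:ℝ) + 1 ∨ True := Or.inr trivial
      rcases le_or_gt rK ((T:ℝ)+1) with h3 | h3
      · rw [← hrKpow]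
        exact pow_le_pow_left₀ (by linarith) h3 _
      · -- rK > T+1 means T = n < fl; handled below anyway, but need the bound only when T = fl
        -- if T = fl then rK < fl + 1 = T+1, contradiction with h3
        exfalso
        rcases min_cases n fl with ⟨hmin, _⟩ | ⟨hmin, hlt⟩
        · -- T = n ≤ fl; then rK ≥ ... cannot conclude; this case needs n < rK... 
          -- use h3 : T + 1 < rK, T = n : n + 1 ≤ rK hence n < fl+1 fine... need different route
          have hTn' : (T:ℝ) = (n:ℝ) := by rw [hTdef, hmin]
          -- n + 1 < rK means fl ≥ n+1: fine, no contradiction here; we derive the needed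
          -- bound differently: in this branch T = n and we will show contradiction with hE2
          -- via hTle below. To keep things simple we derive False from hE2 directly here:
          -- we need T ≥ 2k+2 for that; indeed T = n ≥ 2k+2.
          have hbig : 2*k ≤ T := by omega
          have hTD : (T:ℝ) ≤ D * (n:ℝ)^(e/((q:ℝ)+1)) := by
            have hA := hchoose_lb T hbig
            have hB := le_trans hA (mul_le_mul_of_nonneg_left hTchoose (le_of_lt hDpos))
            have hroot := Stmt11.root_le (Nat.cast_nonneg T)
              (by positivity : (0:ℝ) ≤ D * (n:ℝ)^E) (by omega : 1 ≤ k+1) hB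
            refine le_trans hroot ?_
            rw [Real.mul_rpow (le_of_lt hDpos) (by positivity)]
            have hDr : D^(1/((k+1:ℕ):ℝ)) ≤ D := by
              calc D^(1/((k+1:ℕ):ℝ)) ≤ D^(1:ℝ) := by
                    apply Real.rpow_le_rpow_of_exponent_le hD1
                    rw [div_le_one (by positivity : (0:ℝ) < ((k+1:ℕ):ℝ))]
                    exact_mod_cast Nat.one_le_iff_ne_zero.2 (by omega)
                _ = D := Real.rpow_one D
            have hnr : ((n:ℝ)^E)^(1/((k+1:ℕ):ℝ)) = (n:ℝ)^(e/((q:ℝ)+1)) := by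
              rw [← Real.rpow_mul (le_of_lt hnRpos)]
              congr 1
              rw [← hEe, hγdef]
              push_cast
              field_simp
            rw [hnr]
            exact mul_le_mul_of_nonneg_right hDr (by positivity)
          rw [hTn'] at hTD
          linarith
        · -- T = fl < n, so rK < fl + 1 = T + 1, contradicting h3
          have : (T:ℝ) = (fl:ℝ) := by rw [hTdef, hmin]
          linarith
    -- now T itself is bounded
    rcases lt_or_ge T (2*k+2) with hsmall | hbig
    · -- small T
      have hTb : (T:ℝ) + 1 ≤ 2*(k:ℝ)+2 := by
        have : T + 1 ≤ 2*k+2 := by omega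
        exact_mod_cast this
      have h1 : (KH:ℝ) ≤ (2*(k:ℝ)+2)^(q+1) := by
        refine le_trans hKup (pow_le_pow_left₀ (by positivity) hTb _)
      have h2 : (2*(k:ℝ)+2)^(q+1) ≤ C := le_max_of_le_left (le_max_left _ _)
      calc (KH:ℝ) ≤ (2*(k:ℝ)+2)^(q+1) := h1
        _ = (2*(k:ℝ)+2)^(q+1) * 1 := by ring
        _ ≤ C * (n:ℝ)^e := mul_le_mul h2 hne1 (by norm_num) (by linarith)
    · -- large T
      have hTD : (T:ℝ) ≤ D * (n:ℝ)^(e/((q:ℝ)+1)) := by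
        have hA := hchoose_lb T (by omega)
        have hB := le_trans hA (mul_le_mul_of_nonneg_left hTchoose (le_of_lt hDpos))
        have hroot := Stmt11.root_le (Nat.cast_nonneg T)
          (by positivity : (0:ℝ) ≤ D * (n:ℝ)^E) (by omega : 1 ≤ k+1) hB
        refine le_trans hroot ?_
        rw [Real.mul_rpow (le_of_lt hDpos) (by positivity)]
        have hDr : D^(1/((k+1:ℕ):ℝ)) ≤ D := by
          calc D^(1/((k+1:ℕ):ℝ)) ≤ D^(1:ℝ) := by
                apply Real.rpow_le_rpow_of_exponent_le hD1
                rw [div_le_one (by positivity : (0:ℝ) < ((k+1:ℕ):ℝ))]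
                exact_mod_cast Nat.one_le_iff_ne_zero.2 (by omega)
            _ = D := Real.rpow_one D
        have hnr : ((n:ℝ)^E)^(1/((k+1:ℕ):ℝ)) = (n:ℝ)^(e/((q:ℝ)+1)) := by
          rw [← Real.rpow_mul (le_of_lt hnRpos)]
          congr 1
          rw [← hEe, hγdef]
          push_cast
          field_simp
        rw [hnr]
        exact mul_le_mul_of_nonneg_right hDr (by positivity)
      have hT2 : (T:ℝ) + 1 ≤ 2*(T:ℝ) := by
        have : (1:ℝ) ≤ (T:ℝ) := by exact_mod_cast hT1
        linarith
      have h1 : (KH:ℝ) ≤ (2*(T:ℝ))^(q+1) :=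
        le_trans hKup (pow_le_pow_left₀ (by positivity) hT2 _)
      have h2 : (2*(T:ℝ))^(q+1) ≤ (2*(D * (n:ℝ)^(e/((q:ℝ)+1))))^(q+1) := by
        apply pow_le_pow_left₀ (by positivity)
        linarith
      have h3 : (2*(D * (n:ℝ)^(e/((q:ℝ)+1))))^(q+1) = (2*D)^(q+1) * ((n:ℝ)^(e/((q:ℝ)+1)))^(q+1) := by
        rw [← mul_pow]
        ring_nf
      have h4 : ((n:ℝ)^(e/((q:ℝ)+1)))^(q+1) = (n:ℝ)^e := by
        rw [← Real.rpow_natCast ((n:ℝ)^(e/((q:ℝ)+1))) (q+1), ← Real.rpow_mul (le_of_lt hnRpos)]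
        congr 1
        push_cast
        field_simp
      have h5 : (2*D)^(q+1) ≤ C := le_max_of_le_left (le_max_right _ _)
      calc (KH:ℝ) ≤ (2*(T:ℝ))^(q+1) := h1
        _ ≤ (2*(D * (n:ℝ)^(e/((q:ℝ)+1))))^(q+1) := h2
        _ = (2*D)^(q+1) * ((n:ℝ)^(e/((q:ℝ)+1)))^(q+1) := h3
        _ = (2*D)^(q+1) * (n:ℝ)^e := by rw [h4]
        _ ≤ C * (n:ℝ)^e := mul_le_mul_of_nonneg_right h5 hne0
end

section
/- Let k ≥ 1, 1 ≤ q ≤ k, and let H be the q-skeleton of the complete k-dimensional simplex σ_k on the vertices {1,...,k+1}. Let n and m be positive integers. Consider the linear program: maximize Σ_{v=1}^{k+1} x_v over real variables x_1,...,x_{k+1} subject to 0 ≤ x_v ≤ log n for each v, and Σ_{v ∈ σ} x_v ≤ log( m·C(k+1,i+1) ) for every i-simplex σ of H and every i = 1,...,q. If C(k+1,q+1)·m ≤ n^{q+1}, then the optimal value of this linear program equals ((k+1)/(q+1))·log( m·C(k+1,q+1) ); if C(k+1,q+1)·m > n^{q+1}, then the optimal value equals (k+1)·log n. -/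
open scoped BigOperators

open SComplex


-- sub-lemma: (n-j)^j ≤ C(n,j) * (j+1)^j
lemma aux_sub (n : ℕ) : ∀ j : ℕ, (n - j) ^ j ≤ n.choose j * (j + 1) ^ j := by
  intro j
  induction j with
  | zero => simp
  | succ j ih =>
    have hcancel : (0:ℕ) < (j + 1) ^ (j + 1) := Nat.pow_pos (by omega)
    refine Nat.le_of_mul_le_mul_right ?_ hcancel
    calc (n - (j+1)) ^ (j+1) * (j+1) ^ (j+1)
        = ((n - (j+1)) * (j+1)) ^ (j+1) := by rw [mul_pow]
      _ ≤ ((n - j) * (j+2)) ^ (j+1) := by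
          apply Nat.pow_le_pow_left
          exact Nat.mul_le_mul (by omega) (by omega)
      _ = (n - j) ^ j * ((n - j) * (j+2) ^ (j+1)) := by rw [mul_pow]; ring
      _ ≤ (n.choose j * (j+1) ^ j) * ((n - j) * (j+2) ^ (j+1)) :=
          Nat.mul_le_mul_right _ ih
      _ = (n.choose j * (n - j)) * ((j+2) ^ (j+1) * (j+1) ^ j) := by ring
      _ = (n.choose (j+1) * (j+1)) * ((j+2) ^ (j+1) * (j+1) ^ j) := by
          rw [Nat.choose_succ_right_eq]
      _ = n.choose (j+1) * (j+2) ^ (j+1) * (j+1) ^ (j+1) := by ring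

-- step: C(n,j+1)^j ≤ C(n,j)^(j+1)
lemma aux_step (n j : ℕ) : n.choose (j+1) ^ j ≤ n.choose j ^ (j+1) := by
  have hcancel : (0:ℕ) < (j + 1) ^ j := Nat.pow_pos (by omega)
  refine Nat.le_of_mul_le_mul_right ?_ hcancel
  calc n.choose (j+1) ^ j * (j+1) ^ j
      = (n.choose (j+1) * (j+1)) ^ j := by rw [mul_pow]
    _ = (n.choose j * (n - j)) ^ j := by rw [Nat.choose_succ_right_eq]
    _ = n.choose j ^ j * (n - j) ^ j := by rw [mul_pow]
    _ ≤ n.choose j ^ j * (n.choose j * (j+1) ^ j) :=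
        Nat.mul_le_mul_left _ (aux_sub n j)
    _ = n.choose j ^ (j+1) * (j+1) ^ j := by ring

-- main: for 1 ≤ a ≤ b, C(n,b)^a ≤ C(n,a)^b
lemma aux_choose_pow (n a : ℕ) (ha : 1 ≤ a) :
    ∀ b : ℕ, a ≤ b → n.choose b ^ a ≤ n.choose a ^ b := by
  intro b hb
  induction b, hb using Nat.le_induction with
  | base => exact le_refl _
  | succ b hab ih =>
    have hb1 : b ≠ 0 := by omega
    rw [← Nat.pow_le_pow_iff_left hb1]
    calc (n.choose (b+1) ^ a) ^ b
        = (n.choose (b+1) ^ b) ^ a := by rw [← pow_mul, ← pow_mul, Nat.mul_comm]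
      _ ≤ (n.choose b ^ (b+1)) ^ a := Nat.pow_le_pow_left (aux_step n b) a
      _ = (n.choose b ^ a) ^ (b+1) := by rw [← pow_mul, ← pow_mul, Nat.mul_comm]
      _ ≤ (n.choose a ^ b) ^ (b+1) := Nat.pow_le_pow_left ih (b+1)
      _ = (n.choose a ^ (b+1)) ^ b := by rw [← pow_mul, ← pow_mul, Nat.mul_comm]

-- counting: number of (r+1)-subsets of V containing v
lemma aux_count (V : Finset ℕ) (v : ℕ) (hv : v ∈ V) (r : ℕ) :
    ((V.powersetCard (r+1)).filter (fun σ => v ∈ σ)).card = (V.card - 1).choose r := by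
  rw [← Finset.card_erase_of_mem hv, ← Finset.card_powersetCard r (V.erase v)]
  apply Finset.card_bij (fun σ _ => σ.erase v)
  · intro σ hσ
    simp only [Finset.mem_filter, Finset.mem_powersetCard] at hσ
    refine Finset.mem_powersetCard.2 ⟨Finset.erase_subset_erase v hσ.1.1, ?_⟩
    rw [Finset.card_erase_of_mem hσ.2, hσ.1.2]; omega
  · intro σ₁ h₁ σ₂ h₂ h
    simp only [Finset.mem_filter] at h₁ h₂
    rw [← Finset.insert_erase h₁.2, ← Finset.insert_erase h₂.2, h]
  · intro τ hτ
    rw [Finset.mem_powersetCard] at hτ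
    have hvτ : v ∉ τ := fun hc => Finset.notMem_erase v V (hτ.1 hc)
    refine ⟨insert v τ, ?_, ?_⟩
    · simp only [Finset.mem_filter, Finset.mem_powersetCard]
      refine ⟨⟨?_, ?_⟩, Finset.mem_insert_self v τ⟩
      · exact Finset.insert_subset hv (hτ.1.trans (Finset.erase_subset v V))
      · rw [Finset.card_insert_of_notMem hvτ, hτ.2]
    · exact Finset.erase_insert hvτ

lemma aux_double_count (V : Finset ℕ) (r : ℕ) (f : ℕ → ℝ) :
    ∑ σ ∈ V.powersetCard (r+1), ∑ v ∈ σ, f v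
      = ((V.card - 1).choose r : ℝ) * ∑ v ∈ V, f v := by
  rw [Finset.sum_comm' (t' := V)
      (s' := fun v => (V.powersetCard (r+1)).filter (fun σ => v ∈ σ))
      (fun σ v => by
        simp only [Finset.mem_filter, Finset.mem_powersetCard]
        constructor
        · rintro ⟨⟨h1, h2⟩, h3⟩; exact ⟨⟨⟨h1, h2⟩, h3⟩, h1 h3⟩
        · rintro ⟨⟨⟨h1, h2⟩, h3⟩, _⟩; exact ⟨⟨h1, h2⟩, h3⟩)]
  rw [Finset.mul_sum]
  refine Finset.sum_congr rfl fun v hv => ?_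
  rw [Finset.sum_const, aux_count V v hv r, nsmul_eq_mul]


/-- the linear program `e:one.dim.linear.prog`: for `1 ≤ q ≤ k` and the
`q`-skeleton `H` of `σ_k`, and positive integers `n, m`, the LP maximizing `∑_{v=1}^{k+1} x_v`
subject to `0 ≤ x_v ≤ log n` and `∑_{v ∈ σ} x_v ≤ log(m·C(k+1,i+1))` for every `i`-simplex `σ`
of `H`, `i = 1,…,q`, has optimal value `((k+1)/(q+1))·log(m·C(k+1,q+1))` if
`C(k+1,q+1)·m ≤ n^{q+1}`, and `(k+1)·log n` otherwise. -/
theorem stmt_12 (k q : ℕ) (hk : 1 ≤ k) (hq1 : 1 ≤ q) (hqk : q ≤ k)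
    (n m : ℕ) (hn : 1 ≤ n) (hm : 1 ≤ m) :
    ((k + 1).choose (q + 1) * m ≤ n ^ (q + 1) →
      gammaLP (fun i => if i = 0 then n else m * (k + 1).choose (i + 1)) q
          ((simplexComplex k).skeleton q) =
        ((k : ℝ) + 1) / ((q : ℝ) + 1) * Real.log (m * (k + 1).choose (q + 1))) ∧
    (n ^ (q + 1) < (k + 1).choose (q + 1) * m →
      gammaLP (fun i => if i = 0 then n else m * (k + 1).choose (i + 1)) q
          ((simplexComplex k).skeleton q) =
        ((k : ℝ) + 1) * Real.log n) := by
  classical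
  set V : Finset ℕ := Finset.Icc 1 (k + 1) with hV
  set H : SComplex := (simplexComplex k).skeleton q with hH
  have hVcard : V.card = k + 1 := by rw [hV, Nat.card_Icc]; omega
  have hmem : ∀ σ : Finset ℕ, σ ∈ H.faces ↔ σ ⊆ V ∧ σ ≠ ∅ ∧ σ.card ≤ q + 1 := by
    intro σ
    simp only [hH, SComplex.skeleton, simplexComplex, Finset.mem_filter,
      Finset.mem_powerset, hV]
    tauto
  have hsimp : ∀ i, i ≤ q → H.simplices i = V.powersetCard (i + 1) := by
    intro i hi
    ext σ
    simp only [SComplex.simplices, Finset.mem_filter, hmem, Finset.mem_powersetCard]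
    constructor
    · rintro ⟨⟨h1, h2, h3⟩, h4⟩; exact ⟨h1, h4⟩
    · rintro ⟨h1, h2⟩
      refine ⟨⟨h1, ?_, by omega⟩, h2⟩
      intro hc
      rw [hc, Finset.card_empty] at h2
      omega
  have hverts : H.verts = V := by
    apply Finset.Subset.antisymm
    · exact Finset.sup_le fun s hs => ((hmem s).1 hs).1
    · intro v hv
      have h1 : ({v} : Finset ℕ) ∈ H.faces :=
        (hmem {v}).2 ⟨Finset.singleton_subset_iff.2 hv, by simp, by simp⟩
      exact Finset.le_sup (f := id) h1 (Finset.mem_singleton_self v)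
  set mfun : ℕ → ℕ := fun i => if i = 0 then n else m * (k + 1).choose (i + 1) with hmfun
  set S : Set ℝ := {t : ℝ | ∃ x : ℕ → ℝ,
    (∀ i ≤ q, ∀ σ ∈ H.simplices i,
        0 ≤ ∑ v ∈ σ, x v ∧ ∑ v ∈ σ, x v ≤ Real.log (mfun i)) ∧
    t = ∑ v ∈ H.verts, x v} with hS
  have hgamma : gammaLP mfun q H = sSup S := rfl
  have hq0 : (0:ℝ) < (q:ℝ) + 1 := by positivity
  -- membership of constant feasible points
  have mem_const : ∀ c : ℝ, 0 ≤ c → c ≤ Real.log n →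
      (∀ i, 1 ≤ i → i ≤ q →
        ((i:ℝ) + 1) * c ≤ Real.log ((m * (k + 1).choose (i + 1) : ℕ) : ℝ)) →
      ((k:ℝ) + 1) * c ∈ S := by
    intro c hc0 hcn hci
    refine ⟨fun _ => c, ?_, ?_⟩
    · intro i hi σ hσ
      rw [hsimp i hi, Finset.mem_powersetCard] at hσ
      rw [Finset.sum_const, hσ.2, nsmul_eq_mul]
      constructor
      · positivity
      · rcases Nat.eq_zero_or_pos i with h0 | h1
        · subst h0
          simpa [hmfun] using hcn
        · have := hci i h1 hi
          simp only [hmfun, if_neg (by omega : i ≠ 0)]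
          push_cast at this ⊢
          linarith
    · rw [hverts, Finset.sum_const, hVcard, nsmul_eq_mul]
      push_cast
      ring
  -- generic upper bounds
  have ub2 : ∀ t ∈ S, t ≤ ((k:ℝ) + 1) * Real.log n := by
    rintro t ⟨x, hx, rfl⟩
    rw [hverts]
    have hxv : ∀ v ∈ V, x v ≤ Real.log n := by
      intro v hv
      have hmemσ : ({v} : Finset ℕ) ∈ H.simplices 0 := by
        rw [hsimp 0 (by omega), Finset.mem_powersetCard]
        exact ⟨Finset.singleton_subset_iff.2 hv, Finset.card_singleton v⟩
      have := (hx 0 (by omega) {v} hmemσ).2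
      simpa [hmfun] using this
    calc ∑ v ∈ V, x v ≤ ∑ v ∈ V, Real.log n := Finset.sum_le_sum hxv
      _ = ((k:ℝ) + 1) * Real.log n := by
          rw [Finset.sum_const, hVcard, nsmul_eq_mul]; push_cast; ring
  have ub1 : ∀ t ∈ S, t ≤ ((k:ℝ) + 1) / ((q:ℝ) + 1) *
      Real.log ((m * (k + 1).choose (q + 1) : ℕ) : ℝ) := by
    rintro t ⟨x, hx, rfl⟩
    rw [hverts]
    set L : ℝ := Real.log ((m * (k + 1).choose (q + 1) : ℕ) : ℝ) with hL
    have hLσ : ∀ σ ∈ V.powersetCard (q + 1), ∑ v ∈ σ, x v ≤ L := by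
      intro σ hσ
      have := (hx q le_rfl σ (by rw [hsimp q le_rfl]; exact hσ)).2
      simpa [hmfun, if_neg (by omega : q ≠ 0), hL] using this
    have hsum := Finset.sum_le_card_nsmul (V.powersetCard (q + 1))
      (fun σ => ∑ v ∈ σ, x v) L hLσ
    rw [Finset.card_powersetCard, hVcard, aux_double_count, hVcard, nsmul_eq_mul] at hsum
    have hk1 : k + 1 - 1 = k := by omega
    rw [hk1] at hsum
    have hid : ((k:ℝ) + 1) * (k.choose q : ℝ) =
        ((k + 1).choose (q + 1) : ℝ) * ((q:ℝ) + 1) := by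
      exact_mod_cast Nat.add_one_mul_choose_eq k q
    have hckq : (0:ℝ) < (k.choose q : ℝ) := by
      exact_mod_cast Nat.choose_pos hqk
    rw [div_mul_eq_mul_div, le_div_iff₀ hq0]
    have h3 : (k.choose q : ℝ) * ((∑ v ∈ V, x v) * ((q:ℝ) + 1)) ≤
        (k.choose q : ℝ) * (((k:ℝ) + 1) * L) := by
      calc (k.choose q : ℝ) * ((∑ v ∈ V, x v) * ((q:ℝ) + 1))
          = ((k.choose q : ℝ) * ∑ v ∈ V, x v) * ((q:ℝ) + 1) := by ring
        _ ≤ (((k + 1).choose (q + 1) : ℝ) * L) * ((q:ℝ) + 1) :=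
            mul_le_mul_of_nonneg_right hsum (le_of_lt hq0)
        _ = (((k + 1).choose (q + 1) : ℝ) * ((q:ℝ) + 1)) * L := by ring
        _ = (((k:ℝ) + 1) * (k.choose q : ℝ)) * L := by rw [← hid]
        _ = (k.choose q : ℝ) * (((k:ℝ) + 1) * L) := by ring
    exact le_of_mul_le_mul_left h3 hckq
  constructor
  · -- Case 1
    intro hyp
    set L : ℝ := Real.log ((m * (k + 1).choose (q + 1) : ℕ) : ℝ) with hL
    have hLgoal : Real.log ((m : ℝ) * ((k + 1).choose (q + 1) : ℝ)) = L := by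
      rw [hL]; push_cast; ring_nf
    rw [hgamma, hLgoal]
    apply IsGreatest.csSup_eq
    constructor
    · -- membership
      have hL0 : 0 ≤ L := by
        apply Real.log_nonneg
        have : 1 ≤ m * (k + 1).choose (q + 1) :=
          Nat.one_le_iff_ne_zero.2 (Nat.mul_ne_zero (by omega)
            (Nat.pos_iff_ne_zero.1 (Nat.choose_pos (by omega))))
        exact_mod_cast this
      have hcval : ((k:ℝ) + 1) / ((q:ℝ) + 1) * L = ((k:ℝ) + 1) * (L / ((q:ℝ) + 1)) := by
        ring
      rw [hcval]
      apply mem_const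
      · positivity
      · rw [div_le_iff₀ hq0]
        have h1 : ((m * (k + 1).choose (q + 1) : ℕ) : ℝ) ≤ ((n ^ (q + 1) : ℕ) : ℝ) := by
          exact_mod_cast (by rw [Nat.mul_comm]; exact hyp :
            m * (k + 1).choose (q + 1) ≤ n ^ (q + 1))
        have h2 := Real.log_le_log (by
          have : 1 ≤ m * (k + 1).choose (q + 1) :=
            Nat.one_le_iff_ne_zero.2 (Nat.mul_ne_zero (by omega)
              (Nat.pos_iff_ne_zero.1 (Nat.choose_pos (by omega))))
          exact_mod_cast this) h1
        rw [Nat.cast_pow, Real.log_pow] at h2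
        push_cast at h2 ⊢
        linarith
      · intro i hi1 hiq
        have hnat : (m * (k + 1).choose (q + 1)) ^ (i + 1) ≤
            (m * (k + 1).choose (i + 1)) ^ (q + 1) := by
          rw [mul_pow, mul_pow]
          exact Nat.mul_le_mul (Nat.pow_le_pow_right hm (by omega))
            (aux_choose_pow (k + 1) (i + 1) (by omega) (q + 1) (by omega))
        have hpos : (0:ℝ) < ((m * (k + 1).choose (q + 1) : ℕ) : ℝ) ^ (i + 1) := by
          have : 1 ≤ m * (k + 1).choose (q + 1) :=
            Nat.one_le_iff_ne_zero.2 (Nat.mul_ne_zero (by omega)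
              (Nat.pos_iff_ne_zero.1 (Nat.choose_pos (by omega))))
          have h' : (1:ℝ) ≤ ((m * (k + 1).choose (q + 1) : ℕ) : ℝ) := by exact_mod_cast this
          positivity
        have h2 : Real.log (((m * (k + 1).choose (q + 1) : ℕ) : ℝ) ^ (i + 1)) ≤
            Real.log (((m * (k + 1).choose (i + 1) : ℕ) : ℝ) ^ (q + 1)) := by
          apply Real.log_le_log hpos
          exact_mod_cast hnat
        rw [Real.log_pow, Real.log_pow] at h2
        rw [mul_div_assoc' ((i:ℝ) + 1) L, div_le_iff₀ hq0]
        push_cast at h2 ⊢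
        nlinarith [h2]
    · exact ub1
  · -- Case 2
    intro hyp
    rw [hgamma]
    apply IsGreatest.csSup_eq
    constructor
    · apply mem_const
      · exact Real.log_natCast_nonneg n
      · exact le_rfl
      · intro i hi1 hiq
        have key : n ^ (i + 1) ≤ m * (k + 1).choose (i + 1) := by
          rw [← Nat.pow_le_pow_iff_left (show q + 1 ≠ 0 by omega)]
          calc (n ^ (i + 1)) ^ (q + 1) = (n ^ (q + 1)) ^ (i + 1) := by
                rw [← pow_mul, ← pow_mul, Nat.mul_comm]
            _ ≤ ((k + 1).choose (q + 1) * m) ^ (i + 1) :=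
                Nat.pow_le_pow_left (le_of_lt hyp) _
            _ = m ^ (i + 1) * (k + 1).choose (q + 1) ^ (i + 1) := by
                rw [mul_pow, Nat.mul_comm]
            _ ≤ m ^ (q + 1) * (k + 1).choose (i + 1) ^ (q + 1) :=
                Nat.mul_le_mul (Nat.pow_le_pow_right hm (by omega))
                  (aux_choose_pow (k + 1) (i + 1) (by omega) (q + 1) (by omega))
            _ = (m * (k + 1).choose (i + 1)) ^ (q + 1) := by rw [mul_pow]
        have hn1 : (1:ℝ) ≤ (n:ℝ) := by exact_mod_cast hn
        have h1 : ((n:ℝ)) ^ (i + 1) ≤ ((m * (k + 1).choose (i + 1) : ℕ) : ℝ) := by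
          exact_mod_cast key
        have h2 := Real.log_le_log (by positivity) h1
        rw [Real.log_pow] at h2
        push_cast at h2 ⊢
        linarith
    · exact ub2
end

section
/- Let k ≥ 1, 1 ≤ q < k, and assume Condition (*). Then for every k_0 ∈ {q+1, ..., k} and every subcomplex H of σ_k of dimension k_0, one has (k - k_0) + (q + 1 - C(k,q)·α_q) < k + 1 - Σ_{j=q}^{k_0} s_j(H)·α_j. -/
open scoped BigOperators

open SComplex

/-- inequality `e:interm.1`: for `1 ≤ q < k`, `α_i ∈ [0,∞)` with
`q = min{i ≥ 1 : α_i > 0}`, under Condition (*), for every `k₀ ∈ {q+1,…,k}` and every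
subcomplex `H` of `σ_k` of dimension `k₀`,
`(k-k₀) + (q+1-C(k,q)α_q) < k+1 - ∑_{j=q}^{k₀} s_j(H)α_j`. -/
theorem stmt_13 (k q : ℕ) (hq1 : 1 ≤ q) (hqk : q < k)
    (α : ℕ → ℝ) (hα : ∀ i, 0 ≤ α i)
    (hqpos : 0 < α q) (hqmin : ∀ i, 1 ≤ i → i < q → α i = 0)
    (hstar : ∀ k₀, q + 1 ≤ k₀ → k₀ ≤ k →
      ((k : ℝ) - q) / ((k : ℝ) + 1) * ((k + 1).choose (q + 1) : ℝ) * α q +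
          ∑ j ∈ Finset.Icc (q + 1) k₀, ((k + 1).choose (j + 1) : ℝ) * α j <
        (k₀ : ℝ) - q)
    (k₀ : ℕ) (hk₀1 : q + 1 ≤ k₀) (hk₀2 : k₀ ≤ k)
    (H : SComplex) (hHG : H.IsSubcomplex (simplexComplex k)) (hHdim : H.dim = k₀) :
    ((k : ℝ) - k₀) + ((q : ℝ) + 1 - (k.choose q : ℝ) * α q) <
      (k : ℝ) + 1 - ∑ j ∈ Finset.Icc q k₀, (H.s j : ℝ) * α j := by

  -- bound each s_j(H) by C(k+1, j+1)
  have hs : ∀ j : ℕ, (H.s j : ℝ) ≤ ((k + 1).choose (j + 1) : ℝ) := by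
    intro j
    have hsub : H.simplices j ⊆ (Finset.Icc 1 (k + 1)).powersetCard (j + 1) := by
      intro σ hσ
      rw [SComplex.simplices, Finset.mem_filter] at hσ
      have := hHG hσ.1
      simp only [simplexComplex, Finset.mem_filter, Finset.mem_powerset] at this
      rw [Finset.mem_powersetCard]
      exact ⟨this.1, hσ.2⟩
    have := Finset.card_le_card hsub
    rw [Finset.card_powersetCard, Nat.card_Icc] at this
    simpa [SComplex.s] using (Nat.cast_le (α := ℝ)).2 this
  have hsum : ∑ j ∈ Finset.Icc q k₀, (H.s j : ℝ) * α j ≤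
      ∑ j ∈ Finset.Icc q k₀, ((k + 1).choose (j + 1) : ℝ) * α j := by
    refine Finset.sum_le_sum fun j _ => mul_le_mul_of_nonneg_right (hs j) (hα j)
  have hqk₀ : q ≤ k₀ := le_trans (Nat.le_succ q) hk₀1
  have hsplit : ∑ j ∈ Finset.Icc q k₀, ((k + 1).choose (j + 1) : ℝ) * α j =
      ((k + 1).choose (q + 1) : ℝ) * α q +
        ∑ j ∈ Finset.Icc (q + 1) k₀, ((k + 1).choose (j + 1) : ℝ) * α j := by
    rw [Finset.Icc_eq_cons_Ioc hqk₀, Finset.sum_cons, Finset.Icc_add_one_left_eq_Ioc]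
  have hA : ((q : ℝ) + 1) * ((k + 1).choose (q + 1) : ℝ) = ((k : ℝ) + 1) * (k.choose q : ℝ) := by
    have h2 : ((k.succ * k.choose q : ℕ) : ℝ) = ((k.succ.choose q.succ * q.succ : ℕ) : ℝ) := by
      exact_mod_cast congrArg (Nat.cast : ℕ → ℝ) (Nat.add_one_mul_choose_eq k q)
    push_cast at h2
    linarith [h2]
  have hk1 : (0 : ℝ) < (k : ℝ) + 1 := by positivity
  have hkey : ((k + 1).choose (q + 1) : ℝ) * α q =
      ((k : ℝ) - q) / ((k : ℝ) + 1) * ((k + 1).choose (q + 1) : ℝ) * α q +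
        (k.choose q : ℝ) * α q := by
    field_simp
    linear_combination hA
  have h := hstar k₀ hk₀1 hk₀2
  have hk₀r : (q : ℝ) + 1 ≤ (k₀ : ℝ) := by exact_mod_cast hk₀1
  linarith [hsum, hsplit ▸ hsum]
end

section
/- Let k* be the critical dimension for the multi-parameter random simplicial complex K(n;p) with p_i = n^{-α_i}. Then E[ β_{k*,n} ] ~ n^{τ_{k*}}/(k*+1)! as n → ∞, i.e., the ratio of the two sides converges to 1. -/
open scoped BigOperators

open SComplex

open scoped ENNReal



namespace Stmt15Aux

variable {X : Type*} [DecidableEq X]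

lemma prod_ite_mem_split (t U : Finset X) (hU : U ⊆ t) (f g : X → ℝ) :
    (∏ x ∈ t, (if x ∈ U then f x else g x))
      = (∏ x ∈ U, f x) * ∏ x ∈ t \ U, g x := by
  conv_lhs => rw [← Finset.union_sdiff_of_subset hU]
  rw [Finset.prod_union (Finset.disjoint_sdiff)]
  congr 1
  · exact Finset.prod_congr rfl fun x hx => if_pos hx
  · exact Finset.prod_congr rfl fun x hx => if_neg (Finset.mem_sdiff.1 hx).2

lemma split_sum (s t U : Finset X) (ht : t ⊆ s) (hU : U ⊆ t) (f g : X → ℝ) :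
    ∑ A ∈ s.powerset.filter (fun A => A ∩ t = U),
        ∏ x ∈ s, (if x ∈ A then f x else g x)
      = ((∏ x ∈ U, f x) * ∏ x ∈ t \ U, g x) * ∏ x ∈ s \ t, (f x + g x) := by
  have key : ∑ A ∈ s.powerset.filter (fun A => A ∩ t = U),
      ∏ x ∈ s, (if x ∈ A then f x else g x)
      = ∑ B ∈ (s \ t).powerset,
        ((∏ x ∈ U, f x) * ∏ x ∈ t \ U, g x) *
          ∏ x ∈ s \ t, (if x ∈ B then f x else g x) := by
    refine Finset.sum_nbij' (fun A => A \ t) (fun B => U ∪ B) ?_ ?_ ?_ ?_ ?_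
    · intro A hA
      simp only [Finset.mem_filter, Finset.mem_powerset] at hA ⊢
      exact fun x hx => Finset.mem_sdiff.2 ⟨hA.1 (Finset.mem_sdiff.1 hx).1,
        (Finset.mem_sdiff.1 hx).2⟩
    · intro B hB
      simp only [Finset.mem_filter, Finset.mem_powerset] at hB ⊢
      constructor
      · intro x hx
        rcases Finset.mem_union.1 hx with h | h
        · exact ht (hU h)
        · exact (Finset.mem_sdiff.1 (hB h)).1
      · ext x
        simp only [Finset.mem_inter, Finset.mem_union]
        constructor
        · rintro ⟨h1 | h1, h2⟩
          · exact h1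
          · exact absurd h2 (Finset.mem_sdiff.1 (hB h1)).2
        · intro hx; exact ⟨Or.inl hx, hU hx⟩
    · intro A hA
      simp only [Finset.mem_filter, Finset.mem_powerset] at hA
      ext x
      simp only [Finset.mem_union, Finset.mem_sdiff]
      constructor
      · rintro (hx | ⟨hx, _⟩)
        · rw [← hA.2] at hx; exact (Finset.mem_inter.1 hx).1
        · exact hx
      · intro hx
        by_cases hxt : x ∈ t
        · exact Or.inl (by rw [← hA.2]; exact Finset.mem_inter.2 ⟨hx, hxt⟩)
        · exact Or.inr ⟨hx, hxt⟩
    · intro B hB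
      simp only [Finset.mem_powerset] at hB
      ext x
      simp only [Finset.mem_sdiff, Finset.mem_union]
      constructor
      · rintro ⟨hx | hx, hxt⟩
        · exact absurd (hU hx) hxt
        · exact hx
      · intro hx; exact ⟨Or.inr hx, (Finset.mem_sdiff.1 (hB hx)).2⟩
    · intro A hA
      simp only [Finset.mem_filter, Finset.mem_powerset] at hA
      conv_lhs => rw [← Finset.union_sdiff_of_subset ht]
      rw [Finset.prod_union Finset.disjoint_sdiff]
      congr 1
      · have : ∀ x ∈ t, (if x ∈ A then f x else g x) = (if x ∈ U then f x else g x) := by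
          intro x hx
          have : x ∈ A ↔ x ∈ U := by
            rw [← hA.2]; simp only [Finset.mem_inter]; tauto
          by_cases hxA : x ∈ A
          · rw [if_pos hxA, if_pos (this.1 hxA)]
          · rw [if_neg hxA, if_neg (fun h => hxA (this.2 h))]
        rw [Finset.prod_congr rfl this, prod_ite_mem_split t U hU]
      · refine Finset.prod_congr rfl fun x hx => ?_
        have : x ∈ A ↔ x ∈ A \ t := by
          simp only [Finset.mem_sdiff]
          exact ⟨fun h => ⟨h, (Finset.mem_sdiff.1 hx).2⟩, fun h => h.1⟩
        by_cases hxA : x ∈ A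
        · rw [if_pos hxA, if_pos (this.1 hxA)]
        · rw [if_neg hxA, if_neg (fun h => hxA (this.2 h))]
  rw [key, ← Finset.mul_sum]
  congr 1
  rw [Finset.prod_add]
  exact (Finset.sum_congr rfl fun B hB => by
    rw [prod_ite_mem_split (s \ t) B (Finset.mem_powerset.1 hB)]).symm

end Stmt15Aux

section Part2

open Finset

namespace Stmt15Aux

lemma scomplex_ext {F G : SComplex} (h : F.faces = G.faces) : F = G := by
  cases F; cases G; simpa using h

variable (n k : ℕ)

/-- the possible "coin cells": subsets of `{1,…,n}` of cardinality in `[2, k+1]`. -/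
def cells : Finset (Finset ℕ) :=
  ((Finset.Icc 1 n).powerset).filter fun σ => 2 ≤ σ.card ∧ σ.card ≤ k + 1

lemma mem_cells {σ : Finset ℕ} :
    σ ∈ cells n k ↔ σ ⊆ Finset.Icc 1 n ∧ 2 ≤ σ.card ∧ σ.card ≤ k + 1 := by
  simp [cells]

/-- faces of the complex determined by the open cells `A`. -/
def KcFaces (A : Finset (Finset ℕ)) : Finset (Finset ℕ) :=
  ((Finset.Icc 1 n).powerset).filter fun σ =>
    σ ≠ ∅ ∧ σ.card ≤ k + 1 ∧ ∀ τ ∈ σ.powerset, 2 ≤ τ.card → τ ∈ A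

lemma mem_KcFaces {A : Finset (Finset ℕ)} {σ : Finset ℕ} :
    σ ∈ KcFaces n k A ↔ σ ⊆ Finset.Icc 1 n ∧ σ ≠ ∅ ∧ σ.card ≤ k + 1 ∧
      ∀ τ ⊆ σ, 2 ≤ τ.card → τ ∈ A := by
  simp [KcFaces]

lemma KcFaces_down {A : Finset (Finset ℕ)} {σ τ : Finset ℕ} (hσ : σ ∈ KcFaces n k A)
    (hτσ : τ ⊆ σ) (hτ : τ ≠ ∅) : τ ∈ KcFaces n k A := by
  rw [mem_KcFaces] at hσ ⊢
  exact ⟨hτσ.trans hσ.1, hτ, le_trans (Finset.card_le_card hτσ) hσ.2.2.1,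
    fun ρ hρ h2 => hσ.2.2.2 ρ (hρ.trans hτσ) h2⟩

lemma singleton_mem_KcFaces {A : Finset (Finset ℕ)} {v : ℕ} (hv : v ∈ Finset.Icc 1 n) :
    {v} ∈ KcFaces n k A := by
  rw [mem_KcFaces]
  refine ⟨Finset.singleton_subset_iff.2 hv, by simp, by simp, fun τ hτ h2 => ?_⟩
  have := Finset.card_le_card hτ
  simp at this; omega

/-- the complex determined by the open cells `A`. -/
def Kc (A : Finset (Finset ℕ)) : SComplex where
  faces := insert {1} (KcFaces n k A)
  faces_nonempty := ⟨{1}, Finset.mem_insert_self _ _⟩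
  empty_not_mem := by
    rw [Finset.mem_insert]
    rintro (h | h)
    · exact absurd h.symm (by simp)
    · exact ((mem_KcFaces n k).1 h).2.1 rfl
  down_closed := by
    intro s hs t hts htne
    rcases Finset.mem_insert.1 hs with h | h
    · subst h
      have : t = {1} := by
        have h1 := Finset.subset_singleton_iff.1 hts
        tauto
      subst this; exact Finset.mem_insert_self _ _
    · exact Finset.mem_insert_of_mem (KcFaces_down n k h hts htne)

lemma Kc_faces (hn : 1 ≤ n) (A : Finset (Finset ℕ)) :
    (Kc n k A).faces = KcFaces n k A := by
  have : ({1} : Finset ℕ) ∈ KcFaces n k A :=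
    singleton_mem_KcFaces n k (by simp [Finset.mem_Icc]; omega)
  simp [Kc, Finset.insert_eq_self.2 this]

lemma mem_verts {F : SComplex} {v : ℕ} : v ∈ F.verts ↔ ∃ s ∈ F.faces, v ∈ s := by
  simp [SComplex.verts, Finset.mem_sup]

lemma Kc_verts (hn : 1 ≤ n) (A : Finset (Finset ℕ)) :
    (Kc n k A).verts = Finset.Icc 1 n := by
  ext v
  rw [mem_verts]
  constructor
  · rintro ⟨s, hs, hv⟩
    rw [Kc_faces n k hn] at hs
    exact ((mem_KcFaces n k).1 hs).1 hv
  · intro hv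
    exact ⟨{v}, by rw [Kc_faces n k hn]; exact singleton_mem_KcFaces n k hv, by simp⟩

/-- admissibility: the support condition of `complexProb`. -/
def Adm (K : SComplex) : Prop :=
  K.verts = Finset.Icc 1 n ∧ ∀ t ∈ K.faces, t.card ≤ k + 1

lemma Kc_adm (hn : 1 ≤ n) (A : Finset (Finset ℕ)) : Adm n k (Kc n k A) :=
  ⟨Kc_verts n k hn A, fun t ht => ((mem_KcFaces n k).1 ((Kc_faces n k hn A) ▸ ht)).2.2.1⟩

variable {K : SComplex}

lemma face_subset_Icc (hK : Adm n k K) {σ : Finset ℕ} (hσ : σ ∈ K.faces) :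
    σ ⊆ Finset.Icc 1 n := by
  intro v hv
  rw [← hK.1, mem_verts]
  exact ⟨σ, hσ, hv⟩

lemma singleton_mem_faces (hK : Adm n k K) {v : ℕ} (hv : v ∈ Finset.Icc 1 n) :
    {v} ∈ K.faces := by
  rw [← hK.1, mem_verts] at hv
  obtain ⟨s, hs, hvs⟩ := hv
  exact K.down_closed s hs {v} (Finset.singleton_subset_iff.2 hvs) (by simp)

/-- the open faces: faces of dimension at least 1. -/
def upperF (K : SComplex) : Finset (Finset ℕ) := K.faces.filter fun σ => 2 ≤ σ.card

/-- the potential cells: cells all of whose proper subsets of cardinality at least 2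
are faces. -/
def potAll (K : SComplex) : Finset (Finset ℕ) :=
  (cells n k).filter fun σ => ∀ τ ∈ σ.powerset, τ ≠ σ → 2 ≤ τ.card → τ ∈ K.faces

lemma upperF_subset_cells (hK : Adm n k K) : upperF K ⊆ cells n k := by
  intro σ hσ
  rw [upperF, Finset.mem_filter] at hσ
  exact (mem_cells n k).2 ⟨face_subset_Icc n k hK hσ.1, hσ.2, hK.2 σ hσ.1⟩

lemma upperF_subset_potAll (hK : Adm n k K) : upperF K ⊆ potAll n k K := by
  intro σ hσ
  have hc := upperF_subset_cells n k hK hσ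
  rw [upperF, Finset.mem_filter] at hσ
  rw [potAll, Finset.mem_filter]
  refine ⟨hc, fun τ hτ hne h2 => ?_⟩
  exact K.down_closed σ hσ.1 τ (Finset.mem_powerset.1 hτ)
    (fun h => by simp [h] at h2)

lemma potAll_subset_cells : potAll n k K ⊆ cells n k := Finset.filter_subset _ _

/-- the fiber characterization. -/
lemma Kc_eq_iff (hn : 1 ≤ n) (hK : Adm n k K) {A : Finset (Finset ℕ)}
    (hA : A ⊆ cells n k) :
    Kc n k A = K ↔ A ∩ potAll n k K = upperF K := by
  constructor
  · rintro rfl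
    ext σ
    simp only [Finset.mem_inter, upperF, Finset.mem_filter, potAll]
    constructor
    · rintro ⟨hσA, hσp⟩
      have hσc := (mem_cells n k).1 (hA hσA)
      refine ⟨?_, hσc.2.1⟩
      rw [Kc_faces n k hn, mem_KcFaces]
      refine ⟨hσc.1, fun h => by simp [h] at hσc, hσc.2.2, fun τ hτ h2 => ?_⟩
      by_cases hτσ : τ = σ
      · subst hτσ; exact hσA
      · have hτf := hσp.2 τ (Finset.mem_powerset.2 hτ) hτσ h2
        rw [Kc_faces n k hn, mem_KcFaces] at hτf
        exact hτf.2.2.2 τ subset_rfl h2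
    · rintro ⟨hσf, h2⟩
      have hσf' := hσf
      rw [Kc_faces n k hn, mem_KcFaces] at hσf'
      refine ⟨hσf'.2.2.2 σ subset_rfl h2, ⟨?_, ?_⟩⟩
      · exact (mem_cells n k).2 ⟨hσf'.1, h2, hσf'.2.2.1⟩
      · intro τ hτ hne h2'
        exact (Kc n k A).down_closed σ hσf τ (Finset.mem_powerset.1 hτ)
          (fun h => by simp [h] at h2')
  · intro h
    apply scomplex_ext
    rw [Kc_faces n k hn]
    have hsub : ∀ m : ℕ, ∀ σ : Finset ℕ, σ.card ≤ m → σ ∈ KcFaces n k A → σ ∈ K.faces := by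
      intro m
      induction m with
      | zero =>
        intro σ hσc hσ
        have := ((mem_KcFaces n k).1 hσ).2.1
        rw [Nat.le_zero, Finset.card_eq_zero] at hσc
        exact absurd hσc this
      | succ m ih =>
        intro σ hσc hσ
        have hσ' := (mem_KcFaces n k).1 hσ
        by_cases h1 : σ.card ≤ 1
        · have : σ.card = 1 := by
            rcases Nat.lt_or_ge σ.card 1 with h | h
            · exact absurd (Finset.card_eq_zero.1 (by omega)) hσ'.2.1
            · omega
          obtain ⟨v, rfl⟩ := Finset.card_eq_one.1 this
          exact singleton_mem_faces n k hK (Finset.singleton_subset_iff.1 hσ'.1)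
        · push_neg at h1
          have hσA : σ ∈ A := hσ'.2.2.2 σ subset_rfl h1
          have hσpot : σ ∈ potAll n k K := by
            rw [potAll, Finset.mem_filter]
            refine ⟨(mem_cells n k).2 ⟨hσ'.1, h1, hσ'.2.2.1⟩, fun τ hτ hne h2 => ?_⟩
            have hτσ : τ ⊆ σ := Finset.mem_powerset.1 hτ
            have : τ.card < σ.card := Finset.card_lt_card ⟨hτσ, fun h => hne
              (Finset.Subset.antisymm hτσ h)⟩
            exact ih τ (by omega) (KcFaces_down n k hσ hτσ
              (fun h => by simp [h] at h2))
          have : σ ∈ upperF K := by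
            rw [← h]; exact Finset.mem_inter.2 ⟨hσA, hσpot⟩
          exact (Finset.mem_filter.1 this).1
    apply Finset.Subset.antisymm
    · exact fun σ hσ => hsub σ.card σ le_rfl hσ
    · intro σ hσ
      rw [mem_KcFaces]
      refine ⟨face_subset_Icc n k hK hσ, fun he => K.empty_not_mem (he ▸ hσ),
        hK.2 σ hσ, fun τ hτ h2 => ?_⟩
      have hτf : τ ∈ K.faces := K.down_closed σ hσ τ hτ (fun he => by simp [he] at h2)
      have : τ ∈ upperF K := Finset.mem_filter.2 ⟨hτf, h2⟩
      rw [← h] at this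
      exact (Finset.mem_inter.1 this).1

end Stmt15Aux

end Part2


section Part3

namespace Stmt15Aux

open Finset

variable (n k : ℕ)

/-- the weight (probability) of a configuration of open cells. -/
noncomputable def wt (p : ℕ → ℝ) (A : Finset (Finset ℕ)) : ℝ :=
  ∏ σ ∈ cells n k, if σ ∈ A then p (σ.card - 1) else 1 - p (σ.card - 1)

lemma sum_wt_fiber (p : ℕ → ℝ) {t U : Finset (Finset ℕ)} (ht : t ⊆ cells n k)
    (hU : U ⊆ t) :
    ∑ A ∈ (cells n k).powerset.filter (fun A => A ∩ t = U), wt n k p A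
      = (∏ σ ∈ U, p (σ.card - 1)) * ∏ σ ∈ t \ U, (1 - p (σ.card - 1)) := by
  have := split_sum (cells n k) t U ht hU (fun σ => p (σ.card - 1))
    (fun σ => 1 - p (σ.card - 1))
  simp only [wt]
  rw [this]
  have h1 : ∏ σ ∈ cells n k \ t, (p (σ.card - 1) + (1 - p (σ.card - 1))) = 1 :=
    Finset.prod_eq_one fun σ _ => by ring
  rw [h1, mul_one]

lemma prod_card_group (j : ℕ) (h : ℕ → ℝ) (S : Finset (Finset ℕ))
    (hS : ∀ σ ∈ S, 2 ≤ σ.card ∧ σ.card ≤ j + 1) :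
    ∏ σ ∈ S, h (σ.card - 1)
      = ∏ i ∈ Finset.Icc 1 j, h i ^ (S.filter (fun σ => σ.card = i + 1)).card := by
  have hmaps : ∀ σ ∈ S, σ.card - 1 ∈ Finset.Icc 1 j := by
    intro σ hσ; have := hS σ hσ; rw [Finset.mem_Icc]; omega
  rw [← Finset.prod_fiberwise_of_maps_to hmaps (fun σ => h (σ.card - 1))]
  refine Finset.prod_congr rfl fun i hi => ?_
  rw [Finset.mem_Icc] at hi
  have hfe : S.filter (fun σ => σ.card - 1 = i) = S.filter (fun σ => σ.card = i + 1) :=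
    Finset.filter_congr fun σ hσ => by
      have := (hS σ hσ).1
      constructor <;> intro h' <;> omega
  rw [hfe]
  rw [Finset.prod_congr rfl (fun σ hσ => ?_), Finset.prod_const]
  have : σ.card = i + 1 := (Finset.mem_filter.1 hσ).2
  rw [this]; simp

variable {K : SComplex}

lemma upperF_filter_eq (hK : Adm n k K) {i : ℕ} (hi : 1 ≤ i) :
    (upperF K).filter (fun σ => σ.card = i + 1) = K.simplices i := by
  rw [upperF, SComplex.simplices, Finset.filter_filter]
  refine Finset.filter_congr fun σ _ => ?_
  constructor
  · rintro ⟨_, h⟩; exact h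
  · intro h; exact ⟨by omega, h⟩

lemma potAll_filter_eq (hK : Adm n k K) {i : ℕ} (hi : 1 ≤ i) (hik : i ≤ k) :
    (potAll n k K).filter (fun σ => σ.card = i + 1) = potentialSimplices n i K := by
  ext σ
  simp only [potAll, potentialSimplices, Finset.mem_filter, Finset.mem_powersetCard,
    mem_cells, Finset.mem_powerset]
  constructor
  · rintro ⟨⟨⟨hIcc, h2, hk1⟩, hprop⟩, hcard⟩
    refine ⟨⟨hIcc, hcard⟩, fun τ hτ => ?_⟩
    obtain ⟨hτσ, hτc⟩ := hτ
    rcases Nat.lt_or_ge i 2 with h | h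
    · have : i = 1 := by omega
      subst this
      obtain ⟨v, rfl⟩ := Finset.card_eq_one.1 hτc
      exact singleton_mem_faces n k hK (hIcc (hτσ (by simp)))
    · exact hprop τ hτσ (fun he => by subst he; omega) (by omega)
  · rintro ⟨⟨hIcc, hcard⟩, hbd⟩
    refine ⟨⟨⟨hIcc, by omega, by omega⟩, fun τ hτσ hne h2 => ?_⟩, hcard⟩
    have hlt : τ.card < σ.card :=
      Finset.card_lt_card ⟨hτσ, fun h => hne (Finset.Subset.antisymm hτσ h)⟩
    obtain ⟨u, hτu, huσ, huc⟩ :=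
      Finset.exists_subsuperset_card_eq hτσ (by omega : τ.card ≤ i) (by omega)
    have hu : u ∈ K.faces := hbd u ⟨huσ, huc⟩

    exact K.down_closed u hu τ hτu (fun he => by simp [he] at h2)

lemma filter_sdiff_eq (t U : Finset (Finset ℕ)) (q : Finset ℕ → Prop)
    [DecidablePred q] :
    (t \ U).filter q = t.filter q \ U.filter q := by
  ext σ
  simp only [Finset.mem_filter, Finset.mem_sdiff]
  tauto

open scoped Classical in
lemma sum_fiber_eq_complexProb (hn : 1 ≤ n) (p : ℕ → ℝ) (hK : Adm n k K) :
    ∑ A ∈ (cells n k).powerset.filter (fun A => Kc n k A = K), wt n k p A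
      = SComplex.complexProb n k p K := by
  classical
  have hfe : (cells n k).powerset.filter (fun A => Kc n k A = K)
      = (cells n k).powerset.filter (fun A => A ∩ potAll n k K = upperF K) :=
    Finset.filter_congr fun A hA =>
      Kc_eq_iff n k hn hK (Finset.mem_powerset.1 hA)
  rw [hfe, sum_wt_fiber n k p (potAll_subset_cells n k) (upperF_subset_potAll n k hK)]
  have hb1 : ∀ σ ∈ upperF K, 2 ≤ σ.card ∧ σ.card ≤ k + 1 := by
    intro σ hσ
    have := (mem_cells n k).1 (upperF_subset_cells n k hK hσ)
    exact ⟨this.2.1, this.2.2⟩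
  have hb2 : ∀ σ ∈ potAll n k K \ upperF K, 2 ≤ σ.card ∧ σ.card ≤ k + 1 := by
    intro σ hσ
    have := (mem_cells n k).1 (potAll_subset_cells n k (Finset.mem_sdiff.1 hσ).1)
    exact ⟨this.2.1, this.2.2⟩
  rw [prod_card_group k p _ hb1, prod_card_group k (fun i => 1 - p i) _ hb2]
  have hK' : K.verts = Finset.Icc 1 n ∧ ∀ t ∈ K.faces, t.card ≤ k + 1 := ⟨hK.1, hK.2⟩
  rw [SComplex.complexProb, if_pos hK', ← Finset.prod_mul_distrib]
  refine Finset.prod_congr rfl fun i hi => ?_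
  rw [Finset.mem_Icc] at hi
  congr 1
  · rw [upperF_filter_eq n k hK hi.1]; rfl
  · rw [filter_sdiff_eq, upperF_filter_eq n k hK hi.1,
      potAll_filter_eq n k hK hi.1 hi.2]
    congr 1
    rw [Finset.card_sdiff_of_subset]
    · rfl
    · rw [← upperF_filter_eq n k hK hi.1, ← potAll_filter_eq n k hK hi.1 hi.2]
      exact Finset.filter_subset_filter _ (upperF_subset_potAll n k hK)

lemma adm_of_ne (p : ℕ → ℝ) {K : SComplex} (h : SComplex.complexProb n k p K ≠ 0) :
    Adm n k K := by
  by_contra hA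
  rw [SComplex.complexProb,
    if_neg (fun hc : K.verts = Finset.Icc 1 n ∧ ∀ t ∈ K.faces, t.card ≤ k + 1 =>
      hA hc)] at h
  exact h rfl

lemma expec_eq (hn : 1 ≤ n) (p : ℕ → ℝ) (f : SComplex → ℝ) :
    SComplex.expec n k p f
      = ∑ A ∈ (cells n k).powerset, wt n k p A * f (Kc n k A) := by
  classical
  have himg : ∀ K : SComplex, Adm n k K → K ∈ (cells n k).powerset.image (Kc n k) := by
    intro K hK
    refine Finset.mem_image.2 ⟨upperF K, Finset.mem_powerset.2 (upperF_subset_cells n k hK), ?_⟩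
    rw [Kc_eq_iff n k hn hK (upperF_subset_cells n k hK)]
    exact Finset.inter_eq_left.2 (upperF_subset_potAll n k hK)
  have hz : ∀ K : SComplex, K ∉ (cells n k).powerset.image (Kc n k) →
      SComplex.complexProb n k p K * f K = 0 := by
    intro K hK
    by_cases h : SComplex.complexProb n k p K = 0
    · rw [h, zero_mul]
    · exact absurd (himg K (adm_of_ne n k p h)) hK
  rw [SComplex.expec, tsum_eq_sum hz]
  rw [← Finset.sum_fiberwise_of_maps_to (fun A hA => Finset.mem_image_of_mem (Kc n k) hA)
    (fun A => wt n k p A * f (Kc n k A))]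
  refine Finset.sum_congr rfl fun K hK => ?_
  obtain ⟨B, hB, hBK⟩ := Finset.mem_image.1 hK
  have hKadm : Adm n k K := hBK ▸ Kc_adm n k hn B
  calc SComplex.complexProb n k p K * f K
      = (∑ A ∈ (cells n k).powerset.filter (fun A => Kc n k A = K), wt n k p A) * f K := by
        rw [sum_fiber_eq_complexProb n k hn p hKadm]
    _ = ∑ A ∈ (cells n k).powerset.filter (fun A => Kc n k A = K),
          wt n k p A * f (Kc n k A) := by
        rw [Finset.sum_mul]
        exact Finset.sum_congr rfl fun A hA => by
          rw [(Finset.mem_filter.1 hA).2]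

lemma s_Kc (hn : 1 ≤ n) {j : ℕ} (hj : j ≤ k) (A : Finset (Finset ℕ)) :
    (Kc n k A).s j
      = (((Finset.Icc 1 n).powersetCard (j + 1)).filter
          (fun σ => ∀ τ ⊆ σ, 2 ≤ τ.card → τ ∈ A)).card := by
  classical
  rw [SComplex.s]
  congr 1
  ext σ
  simp only [SComplex.simplices, Finset.mem_filter, Finset.mem_powersetCard,
    Kc_faces n k hn, mem_KcFaces]
  constructor
  · rintro ⟨⟨h1, _, _, h4⟩, h5⟩; exact ⟨⟨h1, h5⟩, h4⟩
  · rintro ⟨⟨h1, h2⟩, h3⟩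
    exact ⟨⟨h1, fun he => by simp [he] at h2, by omega, h3⟩, h2⟩

lemma expec_count (hn : 1 ≤ n) (p : ℕ → ℝ) {j : ℕ} (hj : j ≤ k) :
    SComplex.expec n k p (fun K => (K.s j : ℝ))
      = (n.choose (j + 1) : ℝ) * ∏ i ∈ Finset.Icc 1 j, p i ^ ((j + 1).choose (i + 1)) := by
  classical
  rw [expec_eq n k hn p]
  have hstep : ∀ A ∈ (cells n k).powerset,
      wt n k p A * (((Kc n k A).s j : ℕ) : ℝ)
        = ∑ σ ∈ (Finset.Icc 1 n).powersetCard (j + 1),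
            wt n k p A * (if ∀ τ ⊆ σ, 2 ≤ τ.card → τ ∈ A then (1 : ℝ) else 0) := by
    intro A _
    rw [s_Kc n k hn hj A, ← Finset.mul_sum]
    congr 1
    rw [Finset.card_filter]
    push_cast
    rfl
  rw [Finset.sum_congr rfl hstep, Finset.sum_comm]
  have hinner : ∀ σ ∈ (Finset.Icc 1 n).powersetCard (j + 1),
      ∑ A ∈ (cells n k).powerset,
          wt n k p A * (if ∀ τ ⊆ σ, 2 ≤ τ.card → τ ∈ A then (1 : ℝ) else 0)
        = ∏ i ∈ Finset.Icc 1 j, p i ^ ((j + 1).choose (i + 1)) := by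
    intro σ hσ
    rw [Finset.mem_powersetCard] at hσ
    set D : Finset (Finset ℕ) := σ.powerset.filter (fun τ => 2 ≤ τ.card) with hD
    have hcond : ∀ A : Finset (Finset ℕ),
        (∀ τ ⊆ σ, 2 ≤ τ.card → τ ∈ A) ↔ A ∩ D = D := by
      intro A
      rw [Finset.inter_eq_right]
      constructor
      · intro h τ hτ
        rw [hD, Finset.mem_filter, Finset.mem_powerset] at hτ
        exact h τ hτ.1 hτ.2
      · intro h τ hτ h2
        exact h (by rw [hD, Finset.mem_filter, Finset.mem_powerset]; exact ⟨hτ, h2⟩)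
    have hDc : D ⊆ cells n k := by
      intro τ hτ
      rw [hD, Finset.mem_filter, Finset.mem_powerset] at hτ
      rw [mem_cells]
      have := Finset.card_le_card hτ.1
      exact ⟨hτ.1.trans hσ.1, hτ.2, by omega⟩
    calc ∑ A ∈ (cells n k).powerset,
          wt n k p A * (if ∀ τ ⊆ σ, 2 ≤ τ.card → τ ∈ A then (1 : ℝ) else 0)
        = ∑ A ∈ (cells n k).powerset,
            (if A ∩ D = D then wt n k p A else 0) := by
          refine Finset.sum_congr rfl fun A _ => ?_
          by_cases h : ∀ τ ⊆ σ, 2 ≤ τ.card → τ ∈ A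
          · rw [if_pos h, if_pos ((hcond A).1 h), mul_one]
          · rw [if_neg h, if_neg (fun hh => h ((hcond A).2 hh)), mul_zero]
      _ = ∑ A ∈ (cells n k).powerset.filter (fun A => A ∩ D = D), wt n k p A := by
          rw [Finset.sum_filter]
      _ = (∏ τ ∈ D, p (τ.card - 1)) * ∏ τ ∈ D \ D, (1 - p (τ.card - 1)) := by
          rw [sum_wt_fiber n k p hDc subset_rfl]
      _ = ∏ τ ∈ D, p (τ.card - 1) := by rw [Finset.sdiff_self]; simp
      _ = ∏ i ∈ Finset.Icc 1 j, p i ^ (D.filter (fun τ => τ.card = i + 1)).card := by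
          refine prod_card_group j _ _ fun τ hτ => ?_
          rw [hD, Finset.mem_filter, Finset.mem_powerset] at hτ
          have := Finset.card_le_card hτ.1
          exact ⟨hτ.2, by omega⟩
      _ = ∏ i ∈ Finset.Icc 1 j, p i ^ ((j + 1).choose (i + 1)) := by
          refine Finset.prod_congr rfl fun i hi => ?_
          rw [Finset.mem_Icc] at hi
          congr 1
          have : D.filter (fun τ => τ.card = i + 1) = σ.powersetCard (i + 1) := by
            ext τ
            simp only [hD, Finset.mem_filter, Finset.mem_powerset,
              Finset.mem_powersetCard]
            constructor
            · rintro ⟨⟨h1, _⟩, h3⟩; exact ⟨h1, h3⟩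
            · rintro ⟨h1, h2⟩; exact ⟨⟨h1, by omega⟩, h2⟩
          rw [this, Finset.card_powersetCard, hσ.2]
  rw [Finset.sum_congr rfl hinner, Finset.sum_const, Finset.card_powersetCard,
    Nat.card_Icc]
  simp [nsmul_eq_mul]

lemma wt_nonneg (p : ℕ → ℝ) (hp : ∀ i, 1 ≤ i → i ≤ k → 0 ≤ p i ∧ p i ≤ 1)
    (A : Finset (Finset ℕ)) : 0 ≤ wt n k p A := by
  refine Finset.prod_nonneg fun σ hσ => ?_
  have hc := (mem_cells n k).1 hσ
  have hpi := hp (σ.card - 1) (by omega) (by omega)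
  split
  · exact hpi.1
  · linarith [hpi.2]

end Stmt15Aux

end Part3


section Part4

namespace Stmt15Aux

open Filter

lemma betti_le (K : SComplex) (j : ℕ) : (K.betti j : ℝ) ≤ (K.s j : ℝ) := by
  have : K.betti j ≤ K.s j := le_trans (Nat.sub_le _ _) (Nat.sub_le _ _)
  exact_mod_cast this

lemma betti_ge (K : SComplex) (j : ℕ) :
    (K.s j : ℝ) - (K.s (j - 1) : ℝ) - (K.s (j + 1) : ℝ) ≤ (K.betti j : ℝ) := by
  have h1 : (K.boundaryMatrix j).rank ≤ K.s (j - 1) := by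
    simpa [SComplex.s, Fintype.card_coe] using
      Matrix.rank_le_card_height (K.boundaryMatrix j)
  have h2 : (K.boundaryMatrix (j + 1)).rank ≤ K.s (j + 1) := by
    simpa [SComplex.s, Fintype.card_coe] using
      Matrix.rank_le_card_width (K.boundaryMatrix (j + 1))
  rw [SComplex.betti]
  set r1 := (K.boundaryMatrix j).rank with hr1
  set r2 := (K.boundaryMatrix (j + 1)).rank with hr2
  have c1 : (r1 : ℝ) ≤ K.s (j - 1) := by exact_mod_cast h1
  have c2 : (r2 : ℝ) ≤ K.s (j + 1) := by exact_mod_cast h2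
  rcases le_or_gt (r1 + r2) (K.s j) with h | h
  · rw [Nat.sub_sub, Nat.cast_sub h]
    push_cast
    linarith
  · have hz : K.s j - r1 - r2 = 0 := by omega
    rw [hz]
    have c0 : (K.s j : ℝ) < r1 + r2 := by exact_mod_cast h
    push_cast
    linarith

lemma expec_betti_upper (n k : ℕ) (hn : 1 ≤ n) (p : ℕ → ℝ)
    (hp : ∀ i, 1 ≤ i → i ≤ k → 0 ≤ p i ∧ p i ≤ 1) (j : ℕ) :
    SComplex.expec n k p (fun K => (K.betti j : ℝ))
      ≤ SComplex.expec n k p (fun K => (K.s j : ℝ)) := by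
  rw [expec_eq n k hn, expec_eq n k hn]
  exact Finset.sum_le_sum fun A _ =>
    mul_le_mul_of_nonneg_left (betti_le _ _) (wt_nonneg n k p hp A)

lemma expec_betti_lower (n k : ℕ) (hn : 1 ≤ n) (p : ℕ → ℝ)
    (hp : ∀ i, 1 ≤ i → i ≤ k → 0 ≤ p i ∧ p i ≤ 1) (j : ℕ) :
    SComplex.expec n k p (fun K => (K.s j : ℝ))
        - SComplex.expec n k p (fun K => (K.s (j - 1) : ℝ))
        - SComplex.expec n k p (fun K => (K.s (j + 1) : ℝ))
      ≤ SComplex.expec n k p (fun K => (K.betti j : ℝ)) := by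
  rw [expec_eq n k hn, expec_eq n k hn, expec_eq n k hn, expec_eq n k hn]
  rw [← Finset.sum_sub_distrib, ← Finset.sum_sub_distrib]
  refine Finset.sum_le_sum fun A _ => ?_
  have hw := wt_nonneg n k p hp A
  have hb := betti_ge (Kc n k A) j
  nlinarith [mul_le_mul_of_nonneg_left hb hw]

lemma descFactorial_ratio (r : ℕ) :
    Tendsto (fun n : ℕ => (n.descFactorial r : ℝ) / (n : ℝ) ^ r)
      atTop (nhds 1) := by
  have hlim : Tendsto (fun n : ℕ => ∏ i ∈ Finset.range r, (1 - (i : ℝ) / n))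
      atTop (nhds 1) := by
    have := tendsto_finset_prod (f := fun (i : ℕ) (n : ℕ) => 1 - (i : ℝ) / n)
      (x := atTop) (a := fun _ => (1 : ℝ)) (Finset.range r)
      (fun i _ => by
        simpa using tendsto_const_nhds.sub (tendsto_const_div_atTop_nhds_zero_nat (i : ℝ)))
    simpa using this
  refine hlim.congr' ?_
  filter_upwards [Filter.eventually_ge_atTop (max r 1)] with n hn
  have hr : r ≤ n := le_trans (le_max_left _ _) hn
  have hn1 : 1 ≤ n := le_trans (le_max_right _ _) hn
  have hnR : (0 : ℝ) < n := by exact_mod_cast hn1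
  rw [Nat.descFactorial_eq_prod_range, Nat.cast_prod]
  have hcast : ∀ i ∈ Finset.range r, ((n - i : ℕ) : ℝ) = (n : ℝ) - i := by
    intro i hi
    have : i ≤ n := le_trans (Nat.le_of_lt (Finset.mem_range.1 hi)) hr
    exact Nat.cast_sub this
  rw [Finset.prod_congr rfl hcast]
  have hpow : (n : ℝ) ^ r = ∏ _i ∈ Finset.range r, (n : ℝ) := by
    rw [Finset.prod_const, Finset.card_range]
  rw [hpow, ← Finset.prod_div_distrib]
  refine Finset.prod_congr rfl fun i _ => ?_
  field_simp

lemma prod_pf_eq {n : ℕ} (hn : 1 ≤ n) (α : ℕ → ℝ≥0∞) {j : ℕ}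
    (hfin : ∀ i, 1 ≤ i → i ≤ j → α i ≠ ⊤) (c : ℕ → ℕ) :
    ∏ i ∈ Finset.Icc 1 j,
        (if α i = ⊤ then (0 : ℝ) else (n : ℝ) ^ (-(α i).toReal)) ^ (c i)
      = (n : ℝ) ^ (-(∑ i ∈ Finset.Icc 1 j, (c i : ℝ) * (α i).toReal)) := by
  have hnR : (0 : ℝ) < n := by exact_mod_cast hn
  calc ∏ i ∈ Finset.Icc 1 j,
        (if α i = ⊤ then (0 : ℝ) else (n : ℝ) ^ (-(α i).toReal)) ^ (c i)
      = ∏ i ∈ Finset.Icc 1 j, (n : ℝ) ^ (-((c i : ℝ) * (α i).toReal)) := by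
        refine Finset.prod_congr rfl fun i hi => ?_
        rw [Finset.mem_Icc] at hi
        rw [if_neg (hfin i hi.1 hi.2),
          ← Real.rpow_natCast ((n : ℝ) ^ (-(α i).toReal)) (c i),
          ← Real.rpow_mul hnR.le]
        congr 1; ring
    _ = (n : ℝ) ^ (∑ i ∈ Finset.Icc 1 j, -((c i : ℝ) * (α i).toReal)) :=
        (Real.rpow_sum_of_pos hnR _ _).symm
    _ = _ := by rw [Finset.sum_neg_distrib]

lemma rpow_juggle {x F A : ℝ} (hx : 0 < x) (hF : F ≠ 0) {β τ' γ : ℝ} {m : ℕ}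
    (hexp : -β = τ' - (m : ℝ) + γ) :
    A * x ^ (-β) / (x ^ τ' / F) = A * F / x ^ m * x ^ γ := by
  have h1 : x ^ (-β) = x ^ τ' * (x ^ m)⁻¹ * x ^ γ := by
    rw [hexp, Real.rpow_add hx, sub_eq_add_neg, Real.rpow_add hx,
      Real.rpow_neg hx.le, Real.rpow_natCast]
  have h2 : x ^ τ' ≠ 0 := (Real.rpow_pos_of_pos hx _).ne'
  have h3 : (x : ℝ) ^ m ≠ 0 := pow_ne_zero _ hx.ne'
  rw [h1]
  field_simp

end Stmt15Aux

end Part4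


section Part5

namespace Stmt15Aux

open Filter

lemma tendsto_aux (F : ℝ) (m : ℕ) {δ : ℝ} (hδ : 0 < δ) {g : ℕ → ℝ}
    (hg : ∀ᶠ n in atTop, g n
      = (n.descFactorial m : ℝ) / (n : ℝ) ^ m * F * (n : ℝ) ^ (-δ)) :
    Tendsto g atTop (nhds 0) := by
  have h2 : Tendsto (fun n : ℕ => (n : ℝ) ^ (-δ)) atTop (nhds 0) :=
    (tendsto_rpow_neg_atTop hδ).comp tendsto_natCast_atTop_atTop
  have h3 := ((descFactorial_ratio m).mul_const F).mul h2
  rw [mul_zero] at h3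
  exact h3.congr' (hg.mono fun n hn => hn.symm)

lemma pascal_sum (j : ℕ) (f : ℕ → ℝ) :
    ∑ i ∈ Finset.Icc 1 (j + 1), (((j + 2).choose (i + 1) : ℕ) : ℝ) * f i
      = ∑ i ∈ Finset.Icc 1 (j + 1), (((j + 1).choose i : ℕ) : ℝ) * f i
        + ∑ i ∈ Finset.Icc 1 j, (((j + 1).choose (i + 1) : ℕ) : ℝ) * f i := by
  have step1 : ∑ i ∈ Finset.Icc 1 (j + 1), (((j + 2).choose (i + 1) : ℕ) : ℝ) * f i
      = ∑ i ∈ Finset.Icc 1 (j + 1),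
          ((((j + 1).choose i : ℕ) : ℝ) * f i + (((j + 1).choose (i + 1) : ℕ) : ℝ) * f i) := by
    refine Finset.sum_congr rfl fun i _ => ?_
    have : (j + 2).choose (i + 1) = (j + 1).choose i + (j + 1).choose (i + 1) :=
      Nat.choose_succ_succ _ _
    rw [this]
    push_cast
    ring
  rw [step1, Finset.sum_add_distrib]
  congr 1
  symm
  refine Finset.sum_subset (Finset.Icc_subset_Icc_right (by omega)) ?_
  intro x hx hnx
  have hxe : x = j + 1 := by
    rw [Finset.mem_Icc] at hx
    by_contra hne
    exact hnx (Finset.mem_Icc.2 ⟨hx.1, by omega⟩)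
  subst hxe
  rw [Nat.choose_succ_self]
  simp

end Stmt15Aux

end Part5


/-- if `k*` is the critical dimension for `p_i = n^{-α_i}` (`α_i ∈ [0,∞]`,
`q = min{i ≥ 1 : α_i > 0} ≤ k*`), then `E[β_{k*,n}] ~ n^{τ_{k*}}/(k*+1)!` as `n → ∞`. -/
theorem stmt_15 (kstar q : ℕ) (hk : 1 ≤ kstar)
    (α : ℕ → ℝ≥0∞)
    (hq1 : 1 ≤ q) (hqpos : 0 < α q) (hqmin : ∀ i, 1 ≤ i → i < q → α i = 0)
    (hqk : q ≤ kstar)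
    (hsub : ∑ i ∈ Finset.Icc 1 kstar, (kstar.choose i : ℝ≥0∞) * α i < 1)
    (hcrit : 1 < ∑ i ∈ Finset.Icc 1 (kstar + 1), ((kstar + 1).choose i : ℝ≥0∞) * α i) :
    Filter.Tendsto (fun n : ℕ =>
      expec n (kstar + 1) (fun i => if α i = ⊤ then 0 else (n : ℝ) ^ (-(α i).toReal))
          (fun K => (betti K kstar : ℝ)) /
        ((n : ℝ) ^ ((kstar : ℝ) + 1 -
            ∑ i ∈ Finset.Icc 1 kstar, ((kstar + 1).choose (i + 1) : ℝ) * (α i).toReal) /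
          ((kstar + 1).factorial : ℝ)))
      Filter.atTop (nhds 1) := by
  classical
  obtain ⟨j0, rfl⟩ : ∃ j0, kstar = j0 + 1 := ⟨kstar - 1, by omega⟩
  -- finiteness of the exponents up to dimension `kstar`
  have hfin : ∀ i, 1 ≤ i → i ≤ j0 + 1 → α i ≠ ⊤ := by
    intro i h1 h2 htop
    have hmem : i ∈ Finset.Icc 1 (j0 + 1) := Finset.mem_Icc.2 ⟨h1, h2⟩
    have hchoose : ((j0 + 1).choose i : ℝ≥0∞) ≠ 0 := by
      simp only [ne_eq, Nat.cast_eq_zero]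
      exact (Nat.choose_pos h2).ne'
    have htop' : ∑ i ∈ Finset.Icc 1 (j0 + 1), ((j0 + 1).choose i : ℝ≥0∞) * α i = ⊤ :=
      ENNReal.sum_eq_top.2 ⟨i, hmem, by rw [htop, ENNReal.mul_top hchoose]⟩
    rw [htop'] at hsub
    exact absurd hsub (by simp)
  set t : ℕ → ℝ := fun i => (α i).toReal with ht
  have htnn : ∀ i, 0 ≤ t i := fun i => ENNReal.toReal_nonneg
  set Sr : ℝ := ∑ i ∈ Finset.Icc 1 (j0 + 1), (((j0 + 1).choose i : ℕ) : ℝ) * t i with hSr_def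
  set bk : ℝ := ∑ i ∈ Finset.Icc 1 (j0 + 1), (((j0 + 2).choose (i + 1) : ℕ) : ℝ) * t i
    with hbk_def
  set bkm : ℝ := ∑ i ∈ Finset.Icc 1 j0, (((j0 + 1).choose (i + 1) : ℕ) : ℝ) * t i with hbkm_def
  set bK : ℝ := ∑ i ∈ Finset.Icc 1 (j0 + 2), (((j0 + 3).choose (i + 1) : ℕ) : ℝ) * t i
    with hbK_def
  set F : ℝ := ((j0 + 2).factorial : ℝ) with hF_def
  set τR : ℝ := ((j0 + 1 : ℕ) : ℝ) + 1 - bk with hτ_def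
  have hFpos : 0 < F := by
    rw [hF_def]; exact_mod_cast Nat.factorial_pos _
  -- real subcriticality
  have hSr1 : Sr < 1 := by
    have hne : ∀ i ∈ Finset.Icc 1 (j0 + 1), ((j0 + 1).choose i : ℝ≥0∞) * α i ≠ ⊤ := by
      intro i hi
      rw [Finset.mem_Icc] at hi
      exact ENNReal.mul_ne_top (ENNReal.natCast_ne_top _) (hfin i hi.1 hi.2)
    have h1 := (ENNReal.toReal_lt_toReal hsub.ne_top ENNReal.one_ne_top).2 hsub
    rw [ENNReal.toReal_one, ENNReal.toReal_sum hne] at h1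
    have h2 : ∀ i ∈ Finset.Icc 1 (j0 + 1),
        (((j0 + 1).choose i : ℝ≥0∞) * α i).toReal = (((j0 + 1).choose i : ℕ) : ℝ) * t i := by
      intro i _
      rw [ENNReal.toReal_mul]
      rfl
    rwa [Finset.sum_congr rfl h2] at h1
  have hδpos : (0 : ℝ) < 1 - Sr := by linarith
  -- Pascal identities
  have hPAS1 : bk = Sr + bkm := by
    rw [hbk_def, hSr_def, hbkm_def]
    exact Stmt15Aux.pascal_sum j0 t
  -- probabilities are in [0,1]
  have hp01 : ∀ n : ℕ, 1 ≤ n → ∀ i, 1 ≤ i → i ≤ j0 + 2 →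
      0 ≤ (if α i = ⊤ then (0:ℝ) else (n : ℝ) ^ (-(α i).toReal)) ∧
      (if α i = ⊤ then (0:ℝ) else (n : ℝ) ^ (-(α i).toReal)) ≤ 1 := by
    intro n hn i _ _
    have hn1 : (1 : ℝ) ≤ n := by exact_mod_cast hn
    split
    · norm_num
    · exact ⟨(Real.rpow_pos_of_pos (by linarith) _).le,
        Real.rpow_le_one_of_one_le_of_nonpos hn1 (by simpa using ENNReal.toReal_nonneg)⟩
  have hDpos : ∀ n : ℕ, 1 ≤ n → (0:ℝ) < (n : ℝ) ^ τR / F := by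
    intro n hn
    have : (0:ℝ) < n := by exact_mod_cast hn
    exact div_pos (Real.rpow_pos_of_pos this _) hFpos
  -- closed forms for the expected simplex counts
  have hek : ∀ n : ℕ, 1 ≤ n →
      expec n (j0 + 2) (fun i => if α i = ⊤ then (0:ℝ) else (n : ℝ) ^ (-(α i).toReal))
          (fun K => (K.s (j0 + 1) : ℝ))
        = (n.choose (j0 + 2) : ℝ) * (n : ℝ) ^ (-bk) := by
    intro n hn
    rw [Stmt15Aux.expec_count n (j0 + 2) hn _ (by omega : j0 + 1 ≤ j0 + 2),
      Stmt15Aux.prod_pf_eq hn α (fun i h1 h2 => hfin i h1 h2)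
        (fun i => (j0 + 2).choose (i + 1))]
  have hekm : ∀ n : ℕ, 1 ≤ n →
      expec n (j0 + 2) (fun i => if α i = ⊤ then (0:ℝ) else (n : ℝ) ^ (-(α i).toReal))
          (fun K => (K.s j0 : ℝ))
        = (n.choose (j0 + 1) : ℝ) * (n : ℝ) ^ (-bkm) := by
    intro n hn
    rw [Stmt15Aux.expec_count n (j0 + 2) hn _ (by omega : j0 ≤ j0 + 2),
      Stmt15Aux.prod_pf_eq hn α (fun i h1 h2 => hfin i h1 (by omega))
        (fun i => (j0 + 1).choose (i + 1))]
  have heK : ∀ n : ℕ, 1 ≤ n →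
      expec n (j0 + 2) (fun i => if α i = ⊤ then (0:ℝ) else (n : ℝ) ^ (-(α i).toReal))
          (fun K => (K.s (j0 + 2) : ℝ))
        = (n.choose (j0 + 3) : ℝ) *
            ∏ i ∈ Finset.Icc 1 (j0 + 2),
              (if α i = ⊤ then (0:ℝ) else (n : ℝ) ^ (-(α i).toReal)) ^ ((j0 + 3).choose (i + 1)) := by
    intro n hn
    exact Stmt15Aux.expec_count n (j0 + 2) hn _ (le_refl (j0 + 2))
  -- the sandwich bounds
  have hub : ∀ n : ℕ, 1 ≤ n →
      expec n (j0 + 2) (fun i => if α i = ⊤ then (0:ℝ) else (n : ℝ) ^ (-(α i).toReal))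
          (fun K => (K.betti (j0 + 1) : ℝ))
        ≤ (n.choose (j0 + 2) : ℝ) * (n : ℝ) ^ (-bk) := by
    intro n hn
    rw [← hek n hn]
    exact Stmt15Aux.expec_betti_upper n (j0 + 2) hn _ (hp01 n hn) (j0 + 1)
  have hlb : ∀ n : ℕ, 1 ≤ n →
      (n.choose (j0 + 2) : ℝ) * (n : ℝ) ^ (-bk)
        - (n.choose (j0 + 1) : ℝ) * (n : ℝ) ^ (-bkm)
        - (n.choose (j0 + 3) : ℝ) *
            ∏ i ∈ Finset.Icc 1 (j0 + 2),
              (if α i = ⊤ then (0:ℝ) else (n : ℝ) ^ (-(α i).toReal)) ^ ((j0 + 3).choose (i + 1))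
      ≤ expec n (j0 + 2) (fun i => if α i = ⊤ then (0:ℝ) else (n : ℝ) ^ (-(α i).toReal))
          (fun K => (K.betti (j0 + 1) : ℝ)) := by
    intro n hn
    have h := Stmt15Aux.expec_betti_lower n (j0 + 2) hn _ (hp01 n hn) (j0 + 1)
    simp only [Nat.add_sub_cancel] at h
    rw [hek n hn, hekm n hn, heK n hn] at h
    convert h using 3
  -- limit of the main term
  have hU0 : Filter.Tendsto
      (fun n : ℕ => (n.choose (j0 + 2) : ℝ) * (n : ℝ) ^ (-bk) / ((n : ℝ) ^ τR / F))
      Filter.atTop (nhds 1) := by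
    refine (Stmt15Aux.descFactorial_ratio (j0 + 2)).congr' ?_
    filter_upwards [Filter.eventually_ge_atTop 1] with n hn
    have hnR : (0:ℝ) < n := by exact_mod_cast hn
    have hexp : -bk = τR - ((j0 + 2 : ℕ) : ℝ) + 0 := by
      rw [hτ_def]; push_cast; ring
    rw [Stmt15Aux.rpow_juggle hnR hFpos.ne' hexp, Real.rpow_zero, mul_one, hF_def]
    rw [Nat.descFactorial_eq_factorial_mul_choose]
    push_cast
    ring
  -- the two error terms tend to zero
  have hU1 : Filter.Tendsto
      (fun n : ℕ => (n.choose (j0 + 1) : ℝ) * (n : ℝ) ^ (-bkm) / ((n : ℝ) ^ τR / F))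
      Filter.atTop (nhds 0) := by
    refine Stmt15Aux.tendsto_aux (F / ((j0 + 1).factorial : ℝ)) (j0 + 1) hδpos ?_
    filter_upwards [Filter.eventually_ge_atTop 1] with n hn
    have hnR : (0:ℝ) < n := by exact_mod_cast hn
    have hexp : -bkm = τR - ((j0 + 1 : ℕ) : ℝ) + (-(1 - Sr)) := by
      rw [hτ_def]; push_cast; linarith [hPAS1]
    rw [Stmt15Aux.rpow_juggle hnR hFpos.ne' hexp]
    have hfac : (0:ℝ) < ((j0 + 1).factorial : ℝ) := by exact_mod_cast Nat.factorial_pos _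
    have hpow : (0:ℝ) < (n:ℝ) ^ (j0 + 1) := pow_pos hnR _
    rw [Nat.descFactorial_eq_factorial_mul_choose]
    push_cast
    field_simp
  have hU2 : Filter.Tendsto
      (fun n : ℕ => (n.choose (j0 + 3) : ℝ) *
          (∏ i ∈ Finset.Icc 1 (j0 + 2),
            (if α i = ⊤ then (0:ℝ) else (n : ℝ) ^ (-(α i).toReal)) ^ ((j0 + 3).choose (i + 1)))
          / ((n : ℝ) ^ τR / F))
      Filter.atTop (nhds 0) := by
    by_cases htop : α (j0 + 2) = ⊤
    · have hfe : (fun n : ℕ => (n.choose (j0 + 3) : ℝ) *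
          (∏ i ∈ Finset.Icc 1 (j0 + 2),
            (if α i = ⊤ then (0:ℝ) else (n : ℝ) ^ (-(α i).toReal)) ^ ((j0 + 3).choose (i + 1)))
          / ((n : ℝ) ^ τR / F)) = (fun _ : ℕ => (0:ℝ)) := by
        funext n
        have hzero : ∏ i ∈ Finset.Icc 1 (j0 + 2),
            (if α i = ⊤ then (0:ℝ) else (n : ℝ) ^ (-(α i).toReal)) ^ ((j0 + 3).choose (i + 1))
            = 0 := by
          refine Finset.prod_eq_zero (Finset.mem_Icc.2 ⟨by omega, le_refl _⟩) ?_
          rw [if_pos htop, Nat.choose_self, pow_one]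
        rw [hzero, mul_zero, zero_div]
      rw [hfe]
      exact tendsto_const_nhds
    · -- finite case
      have hfin2 : ∀ i, 1 ≤ i → i ≤ j0 + 2 → α i ≠ ⊤ := by
        intro i h1 h2
        rcases Nat.lt_or_ge i (j0 + 2) with h | h
        · exact hfin i h1 (by omega)
        · have : i = j0 + 2 := by omega
          rwa [this]
      set S' : ℝ := ∑ i ∈ Finset.Icc 1 (j0 + 2), (((j0 + 2).choose i : ℕ) : ℝ) * t i
        with hS'_def
      have hS'1 : 1 < S' := by
        have hne : ∀ i ∈ Finset.Icc 1 (j0 + 2), ((j0 + 2).choose i : ℝ≥0∞) * α i ≠ ⊤ := by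
          intro i hi
          rw [Finset.mem_Icc] at hi
          exact ENNReal.mul_ne_top (ENNReal.natCast_ne_top _) (hfin2 i hi.1 hi.2)
        have hsumne : ∑ i ∈ Finset.Icc 1 (j0 + 2), ((j0 + 2).choose i : ℝ≥0∞) * α i ≠ ⊤ := by
          refine (ENNReal.sum_lt_top.2 ?_).ne
          intro i hi
          exact lt_top_iff_ne_top.2 (hne i hi)
        have h1 := (ENNReal.toReal_lt_toReal ENNReal.one_ne_top hsumne).2 hcrit
        rw [ENNReal.toReal_one, ENNReal.toReal_sum hne] at h1
        have h2 : ∀ i ∈ Finset.Icc 1 (j0 + 2),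
            (((j0 + 2).choose i : ℝ≥0∞) * α i).toReal
              = (((j0 + 2).choose i : ℕ) : ℝ) * t i := by
          intro i _
          rw [ENNReal.toReal_mul]
          rfl
        rwa [Finset.sum_congr rfl h2] at h1
      have hPAS2 : bK = S' + bk := by
        rw [hbK_def, hS'_def, hbk_def]
        exact Stmt15Aux.pascal_sum (j0 + 1) t
      have hδ'pos : (0:ℝ) < S' - 1 := by linarith
      refine Stmt15Aux.tendsto_aux (F / ((j0 + 3).factorial : ℝ)) (j0 + 3) hδ'pos ?_
      filter_upwards [Filter.eventually_ge_atTop 1] with n hn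
      have hnR : (0:ℝ) < n := by exact_mod_cast hn
      rw [Stmt15Aux.prod_pf_eq hn α hfin2 (fun i => (j0 + 3).choose (i + 1)), ← hbK_def]
      have hexp : -bK = τR - ((j0 + 3 : ℕ) : ℝ) + (-(S' - 1)) := by
        rw [hτ_def]; push_cast; linarith [hPAS2]
      rw [Stmt15Aux.rpow_juggle hnR hFpos.ne' hexp]
      have hfac : (0:ℝ) < ((j0 + 3).factorial : ℝ) := by exact_mod_cast Nat.factorial_pos _
      have hpow : (0:ℝ) < (n:ℝ) ^ (j0 + 3) := pow_pos hnR _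
      rw [Nat.descFactorial_eq_factorial_mul_choose]
      push_cast
      field_simp
  -- assemble by squeezing
  have hL : Filter.Tendsto
      (fun n : ℕ => ((n.choose (j0 + 2) : ℝ) * (n : ℝ) ^ (-bk)
        - (n.choose (j0 + 1) : ℝ) * (n : ℝ) ^ (-bkm)
        - (n.choose (j0 + 3) : ℝ) *
            ∏ i ∈ Finset.Icc 1 (j0 + 2),
              (if α i = ⊤ then (0:ℝ) else (n : ℝ) ^ (-(α i).toReal)) ^ ((j0 + 3).choose (i + 1)))
        / ((n : ℝ) ^ τR / F))
      Filter.atTop (nhds 1) := by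
    have := (hU0.sub hU1).sub hU2
    rw [sub_zero, sub_zero] at this
    refine this.congr fun n => ?_
    rw [sub_div, sub_div]
  refine tendsto_of_tendsto_of_tendsto_of_le_of_le' hL hU0 ?_ ?_
  · filter_upwards [Filter.eventually_ge_atTop 1] with n hn
    have := hlb n hn
    gcongr
  · filter_upwards [Filter.eventually_ge_atTop 1] with n hn
    have := hub n hn
    gcongr
end
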